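/- arXiv:1111.3834 — 9 statements merged into one kernel-verified Lean document; each statement's English description precedes it below -/
import Mathlib

section
/- Let β > 0, let E : Fin n → ℝ be an energy function with partition function Z = Σ_i exp(−β E_i) and Gibbs distribution τ_i = exp(−β E_i)/Z, and let p, q be probability distributions on Fin n. Then there exists a stochastic matrix G with Gτ = τ and Gp = q if and only if p thermo-majorizes q, i.e. f_p(x) ≥ f_q(x) for all x ∈ [0, Z]. -/
open Finset

/-- A probability distribution on a finite type. -/
def IsProbDist {ι : Type*} [Fintype ι] (p : ι → ℝ) : Prop :=
  (∀ i, 0 ≤ p i) ∧ ∑ i, p i = 1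

/-- A (column-)stochastic matrix: nonnegative entries, each column sums to 1.
It acts on probability vectors by `(G.mulVec p) j = ∑ i, G j i * p i`. -/
def IsStochastic {ι : Type*} [Fintype ι] (G : Matrix ι ι ℝ) : Prop :=
  (∀ i j, 0 ≤ G i j) ∧ ∀ j, ∑ i, G i j = 1

/-- The partition function `Z = ∑ i, exp (-β E i)`. -/
noncomputable def partZ {ι : Type*} [Fintype ι] (β : ℝ) (E : ι → ℝ) : ℝ :=
  ∑ i, Real.exp (-(β * E i))

/-- The Gibbs distribution `τ i = exp (-β E i) / Z`. -/
noncomputable def gibbs {ι : Type*} [Fintype ι] (β : ℝ) (E : ι → ℝ) : ι → ℝ :=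
  fun i => Real.exp (-(β * E i)) / partZ β E

/-- `π` is a β-ordering of `p`: `k ↦ p (π k) * exp (β * E (π k))` is non-increasing. -/
def IsBetaOrdering {n : ℕ} (β : ℝ) (E : Fin n → ℝ) (p : Fin n → ℝ)
    (π : Equiv.Perm (Fin n)) : Prop :=
  ∀ k l : Fin n, k ≤ l →
    p (π l) * Real.exp (β * E (π l)) ≤ p (π k) * Real.exp (β * E (π k))

/-- The x-coordinate `∑_{i<k} exp (-β E (π i))` of the k-th elbow point. -/
noncomputable def elbowX {n : ℕ} (β : ℝ) (E : Fin n → ℝ) (π : Equiv.Perm (Fin n))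
    (k : ℕ) : ℝ :=
  ∑ i : Fin n, if (i : ℕ) < k then Real.exp (-(β * E (π i))) else 0

/-- The piecewise-linear thermo-majorization curve joining the points
`(∑_{i<k} exp (-β E (π i)), ∑_{i<k} p (π i))` for `k = 0, …, n`, where `π` is a
β-ordering of `p`.  On each segment the slope is `p (π k) * exp (β * E (π k))`. -/
noncomputable def tmCurve {n : ℕ} (β : ℝ) (E : Fin n → ℝ) (p : Fin n → ℝ)
    (π : Equiv.Perm (Fin n)) (x : ℝ) : ℝ :=
  ∑ k : Fin n, p (π k) * Real.exp (β * E (π k)) *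
    max 0 (min x (elbowX β E π ((k : ℕ) + 1)) - elbowX β E π (k : ℕ))

/-- `p` thermo-majorizes `q`: `f_p(x) ≥ f_q(x)` for all `x ∈ [0, Z]`
(for β-orderings of `p` and `q`). -/
def ThermoMajorizes {n : ℕ} (β : ℝ) (E : Fin n → ℝ) (p q : Fin n → ℝ) : Prop :=
  ∀ π σ : Equiv.Perm (Fin n), IsBetaOrdering β E p π → IsBetaOrdering β E q σ →
    ∀ x ∈ Set.Icc (0 : ℝ) (partZ β E), tmCurve β E q σ x ≤ tmCurve β E p π x

namespace TMaux

variable {n : ℕ}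

noncomputable def pre (v : Fin n → ℝ) (m : ℕ) : ℝ :=
  ∑ i : Fin n, if (i : ℕ) < m then v i else 0

lemma pre_zero (v : Fin n → ℝ) : pre v 0 = 0 := by simp [pre]

lemma pre_succ (v : Fin n → ℝ) (k : Fin n) :
    pre v ((k : ℕ) + 1) = pre v (k : ℕ) + v k := by
  unfold pre
  have h : ∀ i : Fin n, (if (i : ℕ) < (k : ℕ) + 1 then v i else 0)
      = (if (i : ℕ) < (k : ℕ) then v i else 0) + (if i = k then v i else 0) := by
    intro i
    rcases lt_trichotomy (i : ℕ) (k : ℕ) with h | h | h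
    · rw [if_pos (Nat.lt_succ_of_lt h), if_pos h, if_neg, add_zero]
      intro hik; rw [hik] at h; exact lt_irrefl _ h
    · have hik : i = k := Fin.ext h
      rw [if_pos (by omega), if_neg (by omega), if_pos hik, zero_add]
    · rw [if_neg (by omega), if_neg (by omega), if_neg, add_zero]
      intro hik; rw [hik] at h; exact lt_irrefl _ h
  rw [Finset.sum_congr rfl fun i _ => h i, Finset.sum_add_distrib]
  congr 1
  simp

lemma pre_nonneg {v : Fin n → ℝ} (hv : ∀ i, 0 ≤ v i) (m : ℕ) : 0 ≤ pre v m :=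
  Finset.sum_nonneg fun i _ => by by_cases h : (i : ℕ) < m <;> simp [h, hv i]

lemma pre_mono {v : Fin n → ℝ} (hv : ∀ i, 0 ≤ v i) {m m' : ℕ} (h : m ≤ m') :
    pre v m ≤ pre v m' :=
  Finset.sum_le_sum fun i _ => by
    by_cases h1 : (i : ℕ) < m
    · rw [if_pos h1, if_pos (lt_of_lt_of_le h1 h)]
    · rw [if_neg h1]; by_cases h2 : (i : ℕ) < m' <;> simp [h2, hv i]

lemma pre_le_sum {v : Fin n → ℝ} (hv : ∀ i, 0 ≤ v i) (m : ℕ) : pre v m ≤ ∑ i, v i :=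
  Finset.sum_le_sum fun i _ => by by_cases h : (i : ℕ) < m <;> simp [h, hv i]

lemma pre_of_le {v : Fin n → ℝ} {m : ℕ} (h : n ≤ m) : pre v m = ∑ i, v i :=
  Finset.sum_congr rfl fun i _ => if_pos (lt_of_lt_of_le i.2 h)

lemma pre_eq_sum_range (v : Fin n → ℝ) : ∀ {m : ℕ}, m ≤ n →
    pre v m = ∑ k ∈ Finset.range m, (if h : k < n then v ⟨k, h⟩ else 0) := by
  intro m
  induction m with
  | zero => intro _; simp [pre_zero]
  | succ m ih =>
    intro hm
    have hmn : m < n := hm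
    have h1 : pre v (m + 1) = pre v m + v ⟨m, hmn⟩ := pre_succ v ⟨m, hmn⟩
    rw [h1, ih (le_of_lt hmn), Finset.sum_range_succ, dif_pos hmn]

lemma min_sub_min (x c d : ℝ) (h : c ≤ d) : min x d - min x c = max 0 (min x d - c) := by
  rcases le_total x c with hx | hx
  · have h2 : min x d ≤ c := (min_le_left x d).trans hx
    rw [min_eq_left (hx.trans h), min_eq_left hx, sub_self, max_eq_left (by linarith)]
  · rw [min_eq_right hx, max_eq_right (by simpa [sub_nonneg] using le_min hx h)]

lemma abel_ge (s D : ℕ → ℝ) :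
    ∀ N : ℕ, (∀ k, k + 1 < N → s (k + 1) ≤ s k) → (∀ m, m ≤ N → 0 ≤ D m) → D 0 = 0 →
      s (N - 1) * D N ≤ ∑ k ∈ Finset.range N, s k * (D (k + 1) - D k)
  | 0, _, _, hD0 => by simp [hD0]
  | (N + 1), hs, hD, hD0 => by
    have ih := abel_ge s D N (fun k hk => hs k (by omega)) (fun m hm => hD m (by omega)) hD0
    rw [Finset.sum_range_succ]
    have h1 : 0 ≤ (s (N - 1) - s N) * D N := by
      rcases Nat.eq_zero_or_pos N with h | h
      · simp [h, hD0]
      · apply mul_nonneg _ (hD N (by omega))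
        have h2 := hs (N - 1) (by omega)
        rw [Nat.sub_add_cancel h] at h2
        linarith
    simp only [Nat.add_sub_cancel]
    nlinarith [ih]


variable {n : ℕ} {β : ℝ} {E : Fin n → ℝ}

lemma exp_mul_exp_neg (β : ℝ) (E : Fin n → ℝ) (i : Fin n) :
    Real.exp (β * E i) * Real.exp (-(β * E i)) = 1 := by
  rw [← Real.exp_add]; simp

lemma elbowX_eq_pre (π : Equiv.Perm (Fin n)) (m : ℕ) :
    elbowX β E π m = pre (fun i => Real.exp (-(β * E (π i)))) m := rfl

lemma elbowX_zero (π : Equiv.Perm (Fin n)) : elbowX β E π 0 = 0 := pre_zero _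

lemma elbowX_nonneg (π : Equiv.Perm (Fin n)) (m : ℕ) : 0 ≤ elbowX β E π m :=
  pre_nonneg (fun i => (Real.exp_pos _).le) m

lemma elbowX_mono (π : Equiv.Perm (Fin n)) {m m' : ℕ} (h : m ≤ m') :
    elbowX β E π m ≤ elbowX β E π m' :=
  pre_mono (fun i => (Real.exp_pos _).le) h

lemma sum_exp_comp (π : Equiv.Perm (Fin n)) :
    ∑ i : Fin n, Real.exp (-(β * E (π i))) = partZ β E :=
  Equiv.sum_comp π fun i => Real.exp (-(β * E i))

lemma elbowX_le_partZ (π : Equiv.Perm (Fin n)) (m : ℕ) : elbowX β E π m ≤ partZ β E := by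
  rw [← sum_exp_comp π]; exact pre_le_sum (fun i => (Real.exp_pos _).le) m

lemma elbowX_top (π : Equiv.Perm (Fin n)) {m : ℕ} (h : n ≤ m) :
    elbowX β E π m = partZ β E := by
  rw [elbowX_eq_pre, pre_of_le h, sum_exp_comp π]

lemma elbowX_succ (π : Equiv.Perm (Fin n)) (k : Fin n) :
    elbowX β E π ((k : ℕ) + 1) = elbowX β E π (k : ℕ) + Real.exp (-(β * E (π k))) :=
  pre_succ _ k

lemma tmCurve_zero (p : Fin n → ℝ) (π : Equiv.Perm (Fin n)) : tmCurve β E p π 0 = 0 := by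
  unfold tmCurve
  apply Finset.sum_eq_zero
  intro k _
  have h1 : min 0 (elbowX β E π ((k : ℕ) + 1)) = 0 :=
    min_eq_left (elbowX_nonneg (β := β) (E := E) π _)
  have h2 : 0 ≤ elbowX β E π (k : ℕ) := elbowX_nonneg π _
  rw [h1, max_eq_left (by linarith), mul_zero]

lemma tmCurve_partZ (p : Fin n → ℝ) (π : Equiv.Perm (Fin n)) :
    tmCurve β E p π (partZ β E) = ∑ i, p i := by
  unfold tmCurve
  rw [← Equiv.sum_comp π p]
  apply Finset.sum_congr rfl
  intro k _
  rw [min_eq_right (elbowX_le_partZ π _), elbowX_succ π k]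
  have h1 : elbowX β E π (k : ℕ) + Real.exp (-(β * E (π k))) - elbowX β E π (k : ℕ)
      = Real.exp (-(β * E (π k))) := by ring
  rw [h1, max_eq_right (Real.exp_pos _).le, mul_assoc, exp_mul_exp_neg, mul_one]

/-- Master inequality: greedy optimality of the tm-curve. -/
lemma sum_le_tmCurve {p : Fin n → ℝ}
    {π : Equiv.Perm (Fin n)} (hπ : IsBetaOrdering β E p π)
    (u : Fin n → ℝ) (hu0 : ∀ k, 0 ≤ u k)
    (hu1 : ∀ k, u k ≤ Real.exp (-(β * E (π k)))) :
    ∑ k, p (π k) * Real.exp (β * E (π k)) * u k ≤ tmCurve β E p π (∑ k, u k) := by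
  set x := ∑ k, u k with hxdef
  have hx0 : 0 ≤ x := Finset.sum_nonneg fun k _ => hu0 k
  have hxZ : x ≤ partZ β E := by
    rw [← sum_exp_comp π]; exact Finset.sum_le_sum fun k _ => hu1 k
  set U : ℕ → ℝ := fun k => if h : k < n then u ⟨k, h⟩ else 0 with hU
  set s : ℕ → ℝ := fun k =>
    if h : k < n then p (π ⟨k, h⟩) * Real.exp (β * E (π ⟨k, h⟩)) else 0 with hs
  set D : ℕ → ℝ := fun m => min x (elbowX β E π m) - ∑ k ∈ Finset.range m, U k with hD
  have hUnn : ∀ k, 0 ≤ U k := by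
    intro k; rw [hU]; by_cases h : k < n <;> simp [h, hu0]
  have hD0 : D 0 = 0 := by simp [hD, elbowX_zero, min_eq_right hx0]
  have hsum_range : ∑ k ∈ Finset.range n, U k = x := by
    rw [hxdef, ← Fin.sum_univ_eq_sum_range U n]
    exact Finset.sum_congr rfl fun i _ => by simp [hU]
  have hDn : D n = 0 := by
    simp only [hD, elbowX_top π le_rfl, min_eq_left hxZ, hsum_range, sub_self]
  have hDpos : ∀ m, m ≤ n → 0 ≤ D m := by
    intro m hm
    rw [hD, sub_nonneg]
    apply le_min
    · rw [← hsum_range]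
      exact Finset.sum_le_sum_of_subset_of_nonneg (Finset.range_subset_range.mpr hm)
        fun k _ _ => hUnn k
    · rw [elbowX_eq_pre, pre_eq_sum_range _ hm]
      apply Finset.sum_le_sum
      intro k _
      by_cases h : k < n
      · simp only [hU, dif_pos h]; exact hu1 _
      · simp only [hU, dif_neg h]; exact le_refl 0
  have hs_anti : ∀ k, k + 1 < n → s (k + 1) ≤ s k := by
    intro k hk
    rw [hs]
    simp only [dif_pos hk, dif_pos (show k < n by omega)]
    exact hπ ⟨k, by omega⟩ ⟨k + 1, hk⟩ (by simp [Fin.mk_le_mk])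
  have habel := abel_ge s D n hs_anti hDpos hD0
  rw [hDn, mul_zero] at habel
  have main : tmCurve β E p π x - ∑ k, p (π k) * Real.exp (β * E (π k)) * u k
      = ∑ k ∈ Finset.range n, s k * (D (k + 1) - D k) := by
    rw [tmCurve, ← Finset.sum_sub_distrib,
      ← Fin.sum_univ_eq_sum_range (fun k => s k * (D (k + 1) - D k)) n]
    apply Finset.sum_congr rfl
    intro k _
    have hk : (k : ℕ) < n := k.isLt
    have hUk : U (k : ℕ) = u k := by simp [hU]
    have hDdiff : D ((k : ℕ) + 1) - D (k : ℕ)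
        = max 0 (min x (elbowX β E π ((k : ℕ) + 1)) - elbowX β E π (k : ℕ)) - u k := by
      simp only [hD]
      rw [Finset.sum_range_succ, hUk,
        ← min_sub_min x _ _ (elbowX_mono π (Nat.le_succ (k : ℕ)))]
      ring
    rw [hDdiff, hs]
    simp only [dif_pos hk, Fin.eta]
    ring
  linarith [habel, main]

lemma forward_dir {p q : Fin n → ℝ}
    {G : Matrix (Fin n) (Fin n) ℝ} (hG : IsStochastic G)
    (hτ : G.mulVec (gibbs β E) = gibbs β E) (hGp : G.mulVec p = q)
    (hZpos : 0 < partZ β E) :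
    ThermoMajorizes β E p q := by
  intro π σ hπ _hσ x hx
  -- columns of G preserve the exponential weights
  have he_col : ∀ j, ∑ i, G j i * Real.exp (-(β * E i)) = Real.exp (-(β * E j)) := by
    intro j
    have h := congrFun hτ j
    simp only [Matrix.mulVec, dotProduct, gibbs, div_eq_mul_inv] at h
    have h2 : (∑ i, G j i * Real.exp (-(β * E i))) * (partZ β E)⁻¹
        = Real.exp (-(β * E j)) * (partZ β E)⁻¹ := by
      rw [Finset.sum_mul, ← h]
      exact Finset.sum_congr rfl fun i _ => by ring
    exact mul_right_cancel₀ (inv_ne_zero hZpos.ne') h2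
  set t : Fin n → ℝ := fun j =>
    max 0 (min x (elbowX β E σ ((σ.symm j : ℕ) + 1)) - elbowX β E σ (σ.symm j))
      * Real.exp (β * E j) with ht
  have ht0 : ∀ j, 0 ≤ t j := fun j =>
    mul_nonneg (le_max_left _ _) (Real.exp_pos _).le
  have ht1 : ∀ j, t j ≤ 1 := by
    intro j
    have h1 : elbowX β E σ ((σ.symm j : ℕ) + 1)
        = elbowX β E σ (σ.symm j) + Real.exp (-(β * E j)) := by
      rw [elbowX_succ σ (σ.symm j), Equiv.apply_symm_apply]
    have h2 : max 0 (min x (elbowX β E σ ((σ.symm j : ℕ) + 1)) - elbowX β E σ (σ.symm j))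
        ≤ Real.exp (-(β * E j)) := by
      apply max_le (Real.exp_pos _).le
      have := min_le_right x (elbowX β E σ ((σ.symm j : ℕ) + 1))
      rw [h1] at this ⊢
      linarith
    calc t j ≤ Real.exp (-(β * E j)) * Real.exp (β * E j) :=
          mul_le_mul_of_nonneg_right h2 (Real.exp_pos _).le
      _ = 1 := by rw [mul_comm]; exact exp_mul_exp_neg β E j
  set t' : Fin n → ℝ := fun i => ∑ j, G j i * t j with ht'
  have ht'0 : ∀ i, 0 ≤ t' i := fun i =>
    Finset.sum_nonneg fun j _ => mul_nonneg (hG.1 j i) (ht0 j)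
  have ht'1 : ∀ i, t' i ≤ 1 := by
    intro i
    calc t' i ≤ ∑ j, G j i * 1 :=
          Finset.sum_le_sum fun j _ => mul_le_mul_of_nonneg_left (ht1 j) (hG.1 j i)
      _ = 1 := by simp [hG.2 i]
  set u : Fin n → ℝ := fun k => t' (π k) * Real.exp (-(β * E (π k))) with hu
  have hu0 : ∀ k, 0 ≤ u k := fun k => mul_nonneg (ht'0 _) (Real.exp_pos _).le
  have hu1 : ∀ k, u k ≤ Real.exp (-(β * E (π k))) := by
    intro k
    simpa [hu] using mul_le_of_le_one_left (Real.exp_pos (-(β * E (π k)))).le (ht'1 (π k))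
  -- total mass of u is x
  have hlsum : ∑ k, t (σ k) * Real.exp (-(β * E (σ k))) = x := by
    have h1 : ∀ k : Fin n, t (σ k) * Real.exp (-(β * E (σ k)))
        = min x (elbowX β E σ ((k : ℕ) + 1)) - min x (elbowX β E σ (k : ℕ)) := by
      intro k
      rw [ht]
      simp only [Equiv.symm_apply_apply]
      rw [mul_assoc, exp_mul_exp_neg, mul_one,
        ← min_sub_min x _ _ (elbowX_mono σ (Nat.le_succ (k : ℕ)))]
    rw [Finset.sum_congr rfl fun k _ => h1 k,
      Fin.sum_univ_eq_sum_range
        (fun m => min x (elbowX β E σ (m + 1)) - min x (elbowX β E σ m)) n,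
      Finset.sum_range_sub (fun m => min x (elbowX β E σ m)),
      elbowX_zero σ, elbowX_top σ le_rfl, min_eq_left hx.2, min_eq_right hx.1, sub_zero]
  have hsum_u : ∑ k, u k = x := by
    have h1 : ∑ k, u k = ∑ i, t' i * Real.exp (-(β * E i)) :=
      Equiv.sum_comp π fun i => t' i * Real.exp (-(β * E i))
    have h2 : ∑ i, t' i * Real.exp (-(β * E i)) = ∑ j, t j * Real.exp (-(β * E j)) := by
      simp only [ht', Finset.sum_mul]
      rw [Finset.sum_comm]
      apply Finset.sum_congr rfl
      intro j _
      rw [← he_col j, Finset.mul_sum]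
      exact Finset.sum_congr rfl fun i _ => by ring
    have h3 : ∑ j, t j * Real.exp (-(β * E j))
        = ∑ k, t (σ k) * Real.exp (-(β * E (σ k))) :=
      (Equiv.sum_comp σ fun j => t j * Real.exp (-(β * E j))).symm
    rw [h1, h2, h3, hlsum]
  -- the q-curve value is ∑ q t
  have hcurve_q : tmCurve β E q σ x = ∑ j, q j * t j := by
    rw [tmCurve, ← Equiv.sum_comp σ fun j => q j * t j]
    apply Finset.sum_congr rfl
    intro k _
    rw [ht]
    simp only [Equiv.symm_apply_apply]
    ring
  have hqt : ∑ j, q j * t j = ∑ k, p (π k) * Real.exp (β * E (π k)) * u k := by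
    have h1 : ∑ j, q j * t j = ∑ i, p i * t' i := by
      rw [← hGp]
      simp only [Matrix.mulVec, dotProduct, ht', Finset.sum_mul, Finset.mul_sum]
      rw [Finset.sum_comm]
      exact Finset.sum_congr rfl fun i _ => Finset.sum_congr rfl fun j _ => by ring
    have h2 : ∑ i, p i * t' i = ∑ k, p (π k) * t' (π k) :=
      (Equiv.sum_comp π fun i => p i * t' i).symm
    rw [h1, h2]
    apply Finset.sum_congr rfl
    intro k _
    rw [hu]
    have h3 := exp_mul_exp_neg β E (π k)
    calc p (π k) * t' (π k) = p (π k) * t' (π k) * 1 := by ring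
      _ = p (π k) * Real.exp (β * E (π k)) * (t' (π k) * Real.exp (-(β * E (π k)))) := by
          rw [← h3]; ring
  calc tmCurve β E q σ x = ∑ k, p (π k) * Real.exp (β * E (π k)) * u k := by
        rw [hcurve_q, hqt]
    _ ≤ tmCurve β E p π (∑ k, u k) := sum_le_tmCurve hπ u hu0 hu1
    _ = tmCurve β E p π x := by rw [hsum_u]
/-- The elementary "filling" function for index `i` w.r.t. the `π`-interval partition. -/
noncomputable def gfun (β : ℝ) (E : Fin n → ℝ) (π : Equiv.Perm (Fin n)) (i : Fin n)
    (t : ℝ) : ℝ :=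
  max 0 (min t (elbowX β E π ((π.symm i : ℕ) + 1)) - elbowX β E π (π.symm i))

lemma gfun_mono (π : Equiv.Perm (Fin n)) (i : Fin n) {t t' : ℝ} (h : t ≤ t') :
    gfun β E π i t ≤ gfun β E π i t' :=
  max_le_max le_rfl (sub_le_sub_right (min_le_min h le_rfl) _)

lemma gfun_zero (π : Equiv.Perm (Fin n)) (i : Fin n) : gfun β E π i 0 = 0 := by
  rw [gfun, min_eq_left (elbowX_nonneg π _)]
  have h := elbowX_nonneg (β := β) (E := E) π (π.symm i : ℕ)
  exact max_eq_left (by linarith)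

lemma gfun_partZ (π : Equiv.Perm (Fin n)) (i : Fin n) :
    gfun β E π i (partZ β E) = Real.exp (-(β * E i)) := by
  rw [gfun, min_eq_right (elbowX_le_partZ π _), elbowX_succ π (π.symm i),
    Equiv.apply_symm_apply]
  have h : elbowX β E π (π.symm i : ℕ) + Real.exp (-(β * E i)) - elbowX β E π (π.symm i : ℕ)
      = Real.exp (-(β * E i)) := by ring
  rw [h]
  exact max_eq_right (Real.exp_pos _).le

lemma sum_gfun_mul (π : Equiv.Perm (Fin n)) (p : Fin n → ℝ) (t : ℝ) :
    ∑ i, p i * Real.exp (β * E i) * gfun β E π i t = tmCurve β E p π t := by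
  rw [tmCurve, ← Equiv.sum_comp π fun i => p i * Real.exp (β * E i) * gfun β E π i t]
  exact Finset.sum_congr rfl fun k _ => by rw [gfun]; simp only [Equiv.symm_apply_apply]

lemma sum_gfun (π : Equiv.Perm (Fin n)) {t : ℝ} (ht : 0 ≤ t) :
    ∑ i, gfun β E π i t = min t (partZ β E) := by
  rw [← Equiv.sum_comp π fun i => gfun β E π i t]
  have h1 : ∀ k : Fin n, gfun β E π (π k) t
      = min t (elbowX β E π ((k : ℕ) + 1)) - min t (elbowX β E π (k : ℕ)) := by
    intro k
    rw [gfun]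
    simp only [Equiv.symm_apply_apply]
    exact (min_sub_min t _ _ (elbowX_mono π (Nat.le_succ (k : ℕ)))).symm
  rw [Finset.sum_congr rfl fun k _ => h1 k,
    Fin.sum_univ_eq_sum_range (fun m => min t (elbowX β E π (m + 1)) - min t (elbowX β E π m)) n,
    Finset.sum_range_sub (fun m => min t (elbowX β E π m)),
    elbowX_zero π, elbowX_top π le_rfl, min_eq_right ht, sub_zero]

/-- The "β-permutation" matrix built from interval overlaps. -/
noncomputable def bMat (β : ℝ) (E : Fin n → ℝ) (π σ : Equiv.Perm (Fin n)) :
    Matrix (Fin n) (Fin n) ℝ :=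
  Matrix.of fun j i =>
    (gfun β E π i (elbowX β E σ ((σ.symm j : ℕ) + 1)) - gfun β E π i (elbowX β E σ (σ.symm j)))
      * Real.exp (β * E i)

lemma bMat_stoch (π σ : Equiv.Perm (Fin n)) : IsStochastic (bMat β E π σ) := by
  constructor
  · intro j i
    apply mul_nonneg _ (Real.exp_pos _).le
    rw [sub_nonneg]
    exact gfun_mono π i (elbowX_mono σ (Nat.le_succ _))
  · intro i
    have h1 : ∑ j, bMat β E π σ j i
        = (∑ j, (gfun β E π i (elbowX β E σ ((σ.symm j : ℕ) + 1))
            - gfun β E π i (elbowX β E σ (σ.symm j)))) * Real.exp (β * E i) := by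
      rw [Finset.sum_mul]; rfl
    have h2 : ∑ j, (gfun β E π i (elbowX β E σ ((σ.symm j : ℕ) + 1))
          - gfun β E π i (elbowX β E σ (σ.symm j)))
        = ∑ k : Fin n, (gfun β E π i (elbowX β E σ ((k : ℕ) + 1))
            - gfun β E π i (elbowX β E σ (k : ℕ))) := by
      rw [← Equiv.sum_comp σ fun j => gfun β E π i (elbowX β E σ ((σ.symm j : ℕ) + 1))
        - gfun β E π i (elbowX β E σ (σ.symm j))]
      exact Finset.sum_congr rfl fun k _ => by simp only [Equiv.symm_apply_apply]
    rw [h1, h2,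
      Fin.sum_univ_eq_sum_range (fun m => gfun β E π i (elbowX β E σ (m + 1))
        - gfun β E π i (elbowX β E σ m)) n,
      Finset.sum_range_sub (fun m => gfun β E π i (elbowX β E σ m)),
      elbowX_zero σ, elbowX_top σ le_rfl, gfun_zero π i, gfun_partZ π i, sub_zero,
      mul_comm]
    exact exp_mul_exp_neg β E i

lemma bMat_gibbs (π σ : Equiv.Perm (Fin n)) :
    (bMat β E π σ).mulVec (gibbs β E) = gibbs β E := by
  funext j
  show ∑ i, bMat β E π σ j i * gibbs β E i = gibbs β E j
  have h1 : ∀ i, bMat β E π σ j i * gibbs β E i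
      = (gfun β E π i (elbowX β E σ ((σ.symm j : ℕ) + 1))
          - gfun β E π i (elbowX β E σ (σ.symm j))) / partZ β E := by
    intro i
    have he := exp_mul_exp_neg β E i
    unfold bMat gibbs
    simp only [Matrix.of_apply, div_eq_mul_inv]
    calc (gfun β E π i (elbowX β E σ ((σ.symm j : ℕ) + 1))
          - gfun β E π i (elbowX β E σ (σ.symm j))) * Real.exp (β * E i)
            * (Real.exp (-(β * E i)) * (partZ β E)⁻¹)
        = (gfun β E π i (elbowX β E σ ((σ.symm j : ℕ) + 1))
            - gfun β E π i (elbowX β E σ (σ.symm j)))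
            * (Real.exp (β * E i) * Real.exp (-(β * E i))) * (partZ β E)⁻¹ := by ring
      _ = _ := by rw [he]; ring
  rw [Finset.sum_congr rfl fun i _ => h1 i, ← Finset.sum_div, Finset.sum_sub_distrib,
    sum_gfun π (elbowX_nonneg σ _), sum_gfun π (elbowX_nonneg σ _),
    min_eq_left (elbowX_le_partZ σ _), min_eq_left (elbowX_le_partZ σ _),
    elbowX_succ σ (σ.symm j), Equiv.apply_symm_apply]
  unfold gibbs
  congr 1
  ring

lemma bMat_apply (π σ : Equiv.Perm (Fin n)) (p : Fin n → ℝ) (j : Fin n) :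
    ((bMat β E π σ).mulVec p) j
      = tmCurve β E p π (elbowX β E σ ((σ.symm j : ℕ) + 1))
        - tmCurve β E p π (elbowX β E σ (σ.symm j)) := by
  show ∑ i, bMat β E π σ j i * p i = _
  rw [← sum_gfun_mul π p, ← sum_gfun_mul π p, ← Finset.sum_sub_distrib]
  apply Finset.sum_congr rfl
  intro i _
  unfold bMat
  simp only [Matrix.of_apply]
  ring
lemma convex_reachable (β : ℝ) (E : Fin n → ℝ) (p : Fin n → ℝ) :
    Convex ℝ {r : Fin n → ℝ | ∃ G : Matrix (Fin n) (Fin n) ℝ, IsStochastic G ∧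
      G.mulVec (gibbs β E) = gibbs β E ∧ G.mulVec p = r} := by
  rintro r₁ ⟨G₁, hs₁, hτ₁, hp₁⟩ r₂ ⟨G₂, hs₂, hτ₂, hp₂⟩ a b ha hb hab
  refine ⟨a • G₁ + b • G₂, ⟨?_, ?_⟩, ?_, ?_⟩
  · intro i j
    simp only [Matrix.add_apply, Matrix.smul_apply, smul_eq_mul]
    exact add_nonneg (mul_nonneg ha (hs₁.1 i j)) (mul_nonneg hb (hs₂.1 i j))
  · intro j
    simp only [Matrix.add_apply, Matrix.smul_apply, smul_eq_mul,
      Finset.sum_add_distrib, ← Finset.mul_sum, hs₁.2 j, hs₂.2 j]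
    linarith
  · rw [Matrix.add_mulVec, Matrix.smul_mulVec, Matrix.smul_mulVec, hτ₁, hτ₂,
      ← add_smul, hab, one_smul]
  · rw [Matrix.add_mulVec, Matrix.smul_mulVec, Matrix.smul_mulVec, hp₁, hp₂]

lemma isClosed_reachable (β : ℝ) (E : Fin n → ℝ) (p : Fin n → ℝ) :
    IsClosed {r : Fin n → ℝ | ∃ G : Matrix (Fin n) (Fin n) ℝ, IsStochastic G ∧
      G.mulVec (gibbs β E) = gibbs β E ∧ G.mulVec p = r} := by
  have himg : {r : Fin n → ℝ | ∃ G : Matrix (Fin n) (Fin n) ℝ, IsStochastic G ∧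
        G.mulVec (gibbs β E) = gibbs β E ∧ G.mulVec p = r}
      = (fun G : Matrix (Fin n) (Fin n) ℝ => G.mulVec p) ''
        {G : Matrix (Fin n) (Fin n) ℝ | IsStochastic G ∧ G.mulVec (gibbs β E) = gibbs β E} := by
    ext r
    constructor
    · rintro ⟨G, h1, h2, h3⟩; exact ⟨G, ⟨h1, h2⟩, h3⟩
    · rintro ⟨G, ⟨h1, h2⟩, h3⟩; exact ⟨G, h1, h2, h3⟩
  rw [himg]
  have hcont : Continuous fun G : Matrix (Fin n) (Fin n) ℝ => G.mulVec p :=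
    continuous_id.matrix_mulVec continuous_const
  have hsub : {G : Matrix (Fin n) (Fin n) ℝ | IsStochastic G ∧
        G.mulVec (gibbs β E) = gibbs β E}
      ⊆ (Set.univ.pi fun _ : Fin n => Set.univ.pi fun _ : Fin n => Set.Icc (0 : ℝ) 1) := by
    rintro G ⟨hG, -⟩
    intro i _
    intro j _
    refine ⟨hG.1 i j, ?_⟩
    have hterm : G i j ≤ ∑ i', G i' j :=
      Finset.single_le_sum (f := fun i' => G i' j) (fun i' _ => hG.1 i' j) (Finset.mem_univ i)
    rw [hG.2 j] at hterm
    exact hterm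
  have hKcompact : IsCompact
      (Set.univ.pi fun _ : Fin n => Set.univ.pi fun _ : Fin n => Set.Icc (0 : ℝ) 1 :
        Set (Matrix (Fin n) (Fin n) ℝ)) :=
    isCompact_univ_pi fun _ => isCompact_univ_pi fun _ => isCompact_Icc
  have hSclosed : IsClosed {G : Matrix (Fin n) (Fin n) ℝ | IsStochastic G ∧
      G.mulVec (gibbs β E) = gibbs β E} := by
    have hEq : {G : Matrix (Fin n) (Fin n) ℝ | IsStochastic G ∧
          G.mulVec (gibbs β E) = gibbs β E}
        = (({G : Matrix (Fin n) (Fin n) ℝ | ∀ i j, 0 ≤ G i j}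
            ∩ {G : Matrix (Fin n) (Fin n) ℝ | ∀ j, ∑ i, G i j = 1})
          ∩ {G : Matrix (Fin n) (Fin n) ℝ | G.mulVec (gibbs β E) = gibbs β E}) := by
      ext G
      simp only [Set.mem_setOf_eq, Set.mem_inter_iff, IsStochastic, and_assoc]
    rw [hEq]
    refine IsClosed.inter (IsClosed.inter ?_ ?_) ?_
    · have h1 : {G : Matrix (Fin n) (Fin n) ℝ | ∀ i j, 0 ≤ G i j}
          = ⋂ i, ⋂ j, {G : Matrix (Fin n) (Fin n) ℝ | 0 ≤ G i j} := by
        ext G; simp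
      rw [h1]
      exact isClosed_iInter fun i => isClosed_iInter fun j =>
        isClosed_le continuous_const (continuous_id.matrix_elem i j)
    · have h2 : {G : Matrix (Fin n) (Fin n) ℝ | ∀ j, ∑ i, G i j = 1}
          = ⋂ j, {G : Matrix (Fin n) (Fin n) ℝ | ∑ i, G i j = 1} := by
        ext G; simp
      rw [h2]
      exact isClosed_iInter fun j => isClosed_eq
        (continuous_finset_sum Finset.univ fun i _ => continuous_id.matrix_elem i j)
        continuous_const
    · exact isClosed_eq (continuous_id.matrix_mulVec continuous_const) continuous_const
  exact ((hKcompact.of_isClosed_subset hSclosed hsub).image hcont).isClosed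
end TMaux

open TMaux in
/-- There exists a Gibbs-preserving stochastic matrix mapping `p` to `q`
if and only if `p` thermo-majorizes `q`. -/
theorem gibbs_preserving_map_iff_thermoMajorizes {n : ℕ} (β : ℝ) (hβ : 0 < β)
    (E : Fin n → ℝ) (p q : Fin n → ℝ) (hp : IsProbDist p) (hq : IsProbDist q) :
    (∃ G : Matrix (Fin n) (Fin n) ℝ, IsStochastic G ∧
        G.mulVec (gibbs β E) = gibbs β E ∧ G.mulVec p = q) ↔
      ThermoMajorizes β E p q := by
  have hn : 0 < n := by
    rcases Nat.eq_zero_or_pos n with h | h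
    · exfalso
      have h2 := hp.2
      subst h
      simp at h2
    · exact h
  have hZ : 0 < partZ β E :=
    Finset.sum_pos (fun i _ => Real.exp_pos _) ⟨⟨0, hn⟩, Finset.mem_univ _⟩
  constructor
  · rintro ⟨G, hG, hτ, hGp⟩
    exact forward_dir hG hτ hGp hZ
  · intro hTM
    by_contra hqV
    set V : Set (Fin n → ℝ) := {r : Fin n → ℝ | ∃ G : Matrix (Fin n) (Fin n) ℝ,
      IsStochastic G ∧ G.mulVec (gibbs β E) = gibbs β E ∧ G.mulVec p = r} with hV
    have hqV' : q ∉ V := hqV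
    obtain ⟨f, u0, hfu, huq⟩ :=
      geometric_hahn_banach_closed_point (convex_reachable β E p) (isClosed_reachable β E p) hqV'
    set c : Fin n → ℝ := fun j => f (Pi.single j 1) with hc
    have hf : ∀ y : Fin n → ℝ, f y = ∑ j, c j * y j := by
      intro y
      have h1 : (∑ j, (y j) • (Pi.single j (1 : ℝ) : Fin n → ℝ)) = y := by
        have h2 : ∀ j : Fin n, (y j) • (Pi.single j (1 : ℝ) : Fin n → ℝ) = Pi.single j (y j) := by
          intro j
          rw [← Pi.single_smul, smul_eq_mul, mul_one]
        rw [Finset.sum_congr rfl fun j _ => h2 j, Finset.univ_sum_single]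
      calc f y = f (∑ j, (y j) • (Pi.single j (1 : ℝ) : Fin n → ℝ)) := by rw [h1]
        _ = ∑ j, (y j) • f ((Pi.single j (1 : ℝ) : Fin n → ℝ)) := by rw [map_sum]; simp
        _ = ∑ j, c j * y j := Finset.sum_congr rfl fun j _ => by
            rw [smul_eq_mul, hc, mul_comm]
    -- permutations
    set σ : Equiv.Perm (Fin n) := Tuple.sort (fun j => -c j) with hσdef
    have hσc : ∀ k l : Fin n, k ≤ l → c (σ l) ≤ c (σ k) := by
      intro k l hkl
      have h := Tuple.monotone_sort (fun j => -c j) hkl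
      simp only [Function.comp_apply, neg_le_neg_iff] at h
      exact h
    set π : Equiv.Perm (Fin n) := Tuple.sort (fun i => -(p i * Real.exp (β * E i))) with hπdef
    have hπ : IsBetaOrdering β E p π := by
      intro k l hkl
      have h := Tuple.monotone_sort (fun i => -(p i * Real.exp (β * E i))) hkl
      simp only [Function.comp_apply, neg_le_neg_iff] at h
      exact h
    set σ' : Equiv.Perm (Fin n) := Tuple.sort (fun i => -(q i * Real.exp (β * E i))) with hσ'def
    have hσ' : IsBetaOrdering β E q σ' := by
      intro k l hkl
      have h := Tuple.monotone_sort (fun i => -(q i * Real.exp (β * E i))) hkl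
      simp only [Function.comp_apply, neg_le_neg_iff] at h
      exact h
    set r : Fin n → ℝ := (bMat β E π σ).mulVec p with hr
    have hrV : r ∈ V := ⟨bMat β E π σ, bMat_stoch π σ, bMat_gibbs π σ, rfl⟩
    set T : ℕ → ℝ := fun m => tmCurve β E p π (elbowX β E σ m) with hT
    set Q : ℕ → ℝ := fun m => pre (fun i => q (σ i)) m with hQ
    set s : ℕ → ℝ := fun k => if h : k < n then c (σ ⟨k, h⟩) else 0 with hs
    set D : ℕ → ℝ := fun m => T m - Q m with hD
    have hQle : ∀ m, m ≤ n → Q m ≤ T m := by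
      intro m _
      set w : Fin n → ℝ := fun k =>
        if (σ.symm (σ' k) : ℕ) < m then Real.exp (-(β * E (σ' k))) else 0 with hw
      have hw0 : ∀ k, 0 ≤ w k := by
        intro k; rw [hw]
        by_cases h : (σ.symm (σ' k) : ℕ) < m <;> simp [h, (Real.exp_pos _).le]
      have hw1 : ∀ k, w k ≤ Real.exp (-(β * E (σ' k))) := by
        intro k; rw [hw]
        by_cases h : (σ.symm (σ' k) : ℕ) < m <;> simp [h, (Real.exp_pos _).le]
      have hsw : ∑ k, w k = elbowX β E σ m := by
        have h1 : ∑ k, w k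
            = ∑ j, (if (σ.symm j : ℕ) < m then Real.exp (-(β * E j)) else 0) :=
          Equiv.sum_comp σ' fun j => if (σ.symm j : ℕ) < m then Real.exp (-(β * E j)) else 0
        have h2 : ∑ j, (if (σ.symm j : ℕ) < m then Real.exp (-(β * E j)) else 0)
            = ∑ i : Fin n, (if (i : ℕ) < m then Real.exp (-(β * E (σ i))) else 0) := by
          rw [← Equiv.sum_comp σ fun j => if (σ.symm j : ℕ) < m then Real.exp (-(β * E j)) else 0]
          exact Finset.sum_congr rfl fun i _ => by simp [Equiv.symm_apply_apply]
        rw [h1, h2]; rfl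
      have hsq : ∑ k, q (σ' k) * Real.exp (β * E (σ' k)) * w k = Q m := by
        have h0 : ∀ k : Fin n, q (σ' k) * Real.exp (β * E (σ' k)) * w k
            = (if (σ.symm (σ' k) : ℕ) < m then q (σ' k) else 0) := by
          intro k
          rw [hw, mul_ite, mul_zero, mul_assoc, exp_mul_exp_neg, mul_one]
        rw [Finset.sum_congr rfl fun k _ => h0 k]
        have h1 : ∑ k, (if (σ.symm (σ' k) : ℕ) < m then q (σ' k) else 0)
            = ∑ j, (if (σ.symm j : ℕ) < m then q j else 0) :=
          Equiv.sum_comp σ' fun j => if (σ.symm j : ℕ) < m then q j else 0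
        have h2 : ∑ j, (if (σ.symm j : ℕ) < m then q j else 0)
            = ∑ i : Fin n, (if (i : ℕ) < m then q (σ i) else 0) := by
          rw [← Equiv.sum_comp σ fun j => if (σ.symm j : ℕ) < m then q j else 0]
          exact Finset.sum_congr rfl fun i _ => by simp [Equiv.symm_apply_apply]
        rw [h1, h2]; rfl
      calc Q m = ∑ k, q (σ' k) * Real.exp (β * E (σ' k)) * w k := hsq.symm
        _ ≤ tmCurve β E q σ' (∑ k, w k) := sum_le_tmCurve hσ' w hw0 hw1
        _ = tmCurve β E q σ' (elbowX β E σ m) := by rw [hsw]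
        _ ≤ tmCurve β E p π (elbowX β E σ m) :=
            hTM π σ' hπ hσ' _ ⟨elbowX_nonneg σ m, elbowX_le_partZ σ m⟩
        _ = T m := rfl
    have hD0 : D 0 = 0 := by
      simp [hD, hT, hQ, elbowX_zero, tmCurve_zero, pre_zero]
    have hDn : D n = 0 := by
      have h1 : T n = 1 := by
        rw [hT]
        show tmCurve β E p π (elbowX β E σ n) = 1
        rw [elbowX_top σ le_rfl, tmCurve_partZ, hp.2]
      have h2 : Q n = 1 := by
        rw [hQ]
        show pre (fun i => q (σ i)) n = 1
        rw [pre_of_le le_rfl, Equiv.sum_comp σ q, hq.2]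
      simp [hD, h1, h2]
    have hs_anti : ∀ k, k + 1 < n → s (k + 1) ≤ s k := by
      intro k hk
      rw [hs]
      simp only [dif_pos hk, dif_pos (show k < n by omega)]
      exact hσc ⟨k, by omega⟩ ⟨k + 1, hk⟩ (by simp [Fin.mk_le_mk])
    have habel := abel_ge s D n hs_anti
      (fun m hm => by rw [hD]; exact sub_nonneg.mpr (hQle m hm)) hD0
    rw [hDn, mul_zero] at habel
    have hmain : ∑ k ∈ Finset.range n, s k * (D (k + 1) - D k) = f r - f q := by
      rw [hf r, hf q, ← Finset.sum_sub_distrib,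
        ← Equiv.sum_comp σ (fun j => c j * r j - c j * q j),
        ← Fin.sum_univ_eq_sum_range (fun k => s k * (D (k + 1) - D k)) n]
      apply Finset.sum_congr rfl
      intro k _
      have hk : (k : ℕ) < n := k.isLt
      have hrk : r (σ k) = T ((k : ℕ) + 1) - T (k : ℕ) := by
        rw [hr, hT]
        show ((bMat β E π σ).mulVec p) (σ k) = _
        rw [bMat_apply π σ p (σ k)]
        simp only [Equiv.symm_apply_apply]
      have hqk : q (σ k) = Q ((k : ℕ) + 1) - Q (k : ℕ) := by
        rw [hQ]
        show q (σ k) = pre (fun i => q (σ i)) ((k : ℕ) + 1) - pre (fun i => q (σ i)) (k : ℕ)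
        rw [pre_succ (fun i => q (σ i)) k]
        ring
      have hsk : s (k : ℕ) = c (σ k) := by
        rw [hs]
        simp only [dif_pos hk, Fin.eta]
      rw [hsk, hD]
      simp only
      rw [hrk, hqk]
      ring
    have hcon : f q ≤ f r := by linarith [habel, hmain]
    linarith [hfu r hrV, huq]
end

section
/- Tensoring with a Gibbs state does not change which transitions are possible: let β > 0, let E : Fin n → ℝ and E′ : Fin n′ → ℝ be energy functions with Gibbs distributions τ and τ′ respectively, and let p, q be probability distributions on Fin n. Consider the product system Fin n × Fin n′ with energies (i, j) ↦ E_i + E′_j and Gibbs distribution τ ⊗ τ′. Then there exists a stochastic matrix G′ on the product system with G′(τ ⊗ τ′) = τ ⊗ τ′ and G′(p ⊗ τ′) = q ⊗ τ′ if and only if there exists a stochastic matrix G on Fin n with Gτ = τ and Gp = q. -/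
open Finset

/-- The product distribution `(p ⊗ p') (i, j) = p i * p' j`. -/
def prodDist {ι κ : Type*} (p : ι → ℝ) (p' : κ → ℝ) : ι × κ → ℝ :=
  fun x => p x.1 * p' x.2

/-!
The Gibbs state of the product system is `τ ⊗ τ'`, so both directions come from maps between
channels on the two systems. A channel `G` on the first factor lifts to `G ⊗ 1`, which sends
`p ⊗ τ'` to `Gp ⊗ τ'`. Conversely a channel `G'` on the product system induces the channel
`p ↦ Tr₂ (G' (p ⊗ τ'))` on the first factor, and tracing out the second factor of `r ⊗ τ'`
gives back `r` because `τ'` is normalised.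
-/

open Matrix

open scoped Kronecker

section Gibbs

variable {ι κ : Type*} [Fintype ι] [Fintype κ]

theorem partZ_add (β : ℝ) (E : ι → ℝ) (E' : κ → ℝ) :
    partZ β (fun x : ι × κ => E x.1 + E' x.2) = partZ β E * partZ β E' := by
  simp only [partZ, Fintype.sum_prod_type, mul_add, neg_add, Real.exp_add, ← sum_mul,
    ← mul_sum]

theorem gibbs_add (β : ℝ) (E : ι → ℝ) (E' : κ → ℝ) :
    gibbs β (fun x : ι × κ => E x.1 + E' x.2) = prodDist (gibbs β E) (gibbs β E') := by
  funext x
  simp only [gibbs, prodDist, partZ_add, mul_add, neg_add, Real.exp_add, div_mul_div_comm]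

theorem partZ_pos [Nonempty ι] (β : ℝ) (E : ι → ℝ) : 0 < partZ β E :=
  sum_pos (fun _ _ => Real.exp_pos _) univ_nonempty

theorem isProbDist_gibbs [Nonempty ι] (β : ℝ) (E : ι → ℝ) : IsProbDist (gibbs β E) := by
  refine ⟨fun _ => div_nonneg (Real.exp_pos _).le (partZ_pos β E).le, ?_⟩
  simp only [gibbs]
  rw [← sum_div, ← partZ, div_self (partZ_pos β E).ne']

end Gibbs

section Channels

variable {ι κ : Type*} [Fintype ι] [Fintype κ]

def margFst (r : ι × κ → ℝ) : ι → ℝ :=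
  fun i => ∑ j, r (i, j)

omit [Fintype ι] in
theorem margFst_prodDist {v : ι → ℝ} {w : κ → ℝ} (hw : ∑ j, w j = 1) :
    margFst (prodDist v w) = v := by
  funext i
  simp only [margFst, prodDist, ← mul_sum, hw, mul_one]

def partialTraceSnd (G' : Matrix (ι × κ) (ι × κ) ℝ) (w : κ → ℝ) : Matrix ι ι ℝ :=
  fun i k => ∑ j, ∑ l, G' (i, j) (k, l) * w l

theorem partialTraceSnd_mulVec (G' : Matrix (ι × κ) (ι × κ) ℝ) (w : κ → ℝ) (v : ι → ℝ) :
    partialTraceSnd G' w *ᵥ v = margFst (G' *ᵥ prodDist v w) := by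
  funext i
  simp only [mulVec, dotProduct, partialTraceSnd, margFst, prodDist, Fintype.sum_prod_type,
    sum_mul]
  rw [sum_comm]
  exact sum_congr rfl fun j _ => sum_congr rfl fun k _ => sum_congr rfl fun l _ => by ring

theorem IsStochastic.partialTraceSnd {G' : Matrix (ι × κ) (ι × κ) ℝ} {w : κ → ℝ}
    (hG' : IsStochastic G') (hw : IsProbDist w) : IsStochastic (partialTraceSnd G' w) := by
  refine ⟨fun i k => sum_nonneg fun j _ => sum_nonneg fun l _ =>
    mul_nonneg (hG'.1 _ _) (hw.1 l), fun k => ?_⟩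
  calc ∑ i, ∑ j, ∑ l, G' (i, j) (k, l) * w l
      = ∑ l, (∑ x : ι × κ, G' x (k, l)) * w l := by
        rw [← Fintype.sum_prod_type' (f := fun i j => ∑ l, G' (i, j) (k, l) * w l), sum_comm]
        simp only [sum_mul]
    _ = 1 := by simp only [hG'.2, one_mul, hw.2]

theorem kronecker_mulVec_prodDist (G : Matrix ι ι ℝ) (H : Matrix κ κ ℝ) (v : ι → ℝ)
    (w : κ → ℝ) : (G ⊗ₖ H) *ᵥ prodDist v w = prodDist (G *ᵥ v) (H *ᵥ w) := by
  funext x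
  simp only [mulVec, dotProduct, kroneckerMap_apply, prodDist, Fintype.sum_prod_type,
    sum_mul_sum]
  exact sum_congr rfl fun i _ => sum_congr rfl fun j _ => by ring

theorem IsStochastic.kronecker {G : Matrix ι ι ℝ} {H : Matrix κ κ ℝ} (hG : IsStochastic G)
    (hH : IsStochastic H) : IsStochastic (G ⊗ₖ H) := by
  refine ⟨fun x y => mul_nonneg (hG.1 _ _) (hH.1 _ _), fun y => ?_⟩
  simp only [kroneckerMap_apply, Fintype.sum_prod_type, ← mul_sum, ← sum_mul, hG.2, hH.2,
    one_mul]

theorem isStochastic_one [DecidableEq ι] : IsStochastic (1 : Matrix ι ι ℝ) := by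
  refine ⟨fun i j => ?_, fun j => ?_⟩
  · rw [one_apply]
    split_ifs <;> norm_num
  · simp [one_apply]

end Channels

theorem tensor_gibbs_iff_general {n n' : ℕ} (hn' : 0 < n') (β : ℝ)
    (E : Fin n → ℝ) (E' : Fin n' → ℝ) (p q : Fin n → ℝ) :
    (∃ G' : Matrix (Fin n × Fin n') (Fin n × Fin n') ℝ, IsStochastic G' ∧
        G'.mulVec (gibbs β (fun x : Fin n × Fin n' => E x.1 + E' x.2)) =
          gibbs β (fun x : Fin n × Fin n' => E x.1 + E' x.2) ∧
        G'.mulVec (prodDist p (gibbs β E')) = prodDist q (gibbs β E')) ↔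
      (∃ G : Matrix (Fin n) (Fin n) ℝ, IsStochastic G ∧
        G.mulVec (gibbs β E) = gibbs β E ∧ G.mulVec p = q) := by
  have : Nonempty (Fin n') := Fin.pos_iff_nonempty.mp hn'
  have hτ' := isProbDist_gibbs β E'
  rw [gibbs_add]
  constructor
  · rintro ⟨G', hG', hG'τ, hG'p⟩
    refine ⟨partialTraceSnd G' (gibbs β E'), hG'.partialTraceSnd hτ', ?_, ?_⟩
    · rw [partialTraceSnd_mulVec, hG'τ, margFst_prodDist hτ'.2]
    · rw [partialTraceSnd_mulVec, hG'p, margFst_prodDist hτ'.2]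
  · rintro ⟨G, hG, hGτ, hGp⟩
    refine ⟨G ⊗ₖ 1, hG.kronecker isStochastic_one, ?_, ?_⟩
    · rw [kronecker_mulVec_prodDist, one_mulVec, hGτ]
    · rw [kronecker_mulVec_prodDist, one_mulVec, hGp]

/-- Tensoring with a Gibbs state does not change which transitions are
possible: on the product system `Fin n × Fin n'` with energies `(i,j) ↦ E i + E' j`
(whose Gibbs distribution is `τ ⊗ τ'`), there is a Gibbs-preserving stochastic matrix
mapping `p ⊗ τ'` to `q ⊗ τ'` iff there is a Gibbs-preserving stochastic matrix on
`Fin n` mapping `p` to `q`. -/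
theorem tensor_gibbs_iff {n n' : ℕ} (hn' : 0 < n') (β : ℝ) (hβ : 0 < β)
    (E : Fin n → ℝ) (E' : Fin n' → ℝ) (p q : Fin n → ℝ)
    (hp : IsProbDist p) (hq : IsProbDist q) :
    (∃ G' : Matrix (Fin n × Fin n') (Fin n × Fin n') ℝ, IsStochastic G' ∧
        G'.mulVec (gibbs β (fun x : Fin n × Fin n' => E x.1 + E' x.2)) =
          gibbs β (fun x : Fin n × Fin n' => E x.1 + E' x.2) ∧
        G'.mulVec (prodDist p (gibbs β E')) = prodDist q (gibbs β E')) ↔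
      (∃ G : Matrix (Fin n) (Fin n) ℝ, IsStochastic G ∧
        G.mulVec (gibbs β E) = gibbs β E ∧ G.mulVec p = q) :=
  tensor_gibbs_iff_general hn' β E E' p q
end

section
/- The min-relative entropy is bounded above by the relative entropy, which is bounded above by the max-relative entropy: for probability distributions p, q on Fin n with q_i > 0 whenever p_i > 0, one has D_min(p‖q) ≤ Σ_{i : p_i>0} p_i · ln(p_i/q_i) ≤ D_max(p‖q). In particular D_min(p‖q) ≤ D_max(p‖q), so the single-shot free energy F_min = F_β + kT·D_min never exceeds F_max = F_β + kT·D_max. -/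
/-!
The lower bound is Jensen's inequality for the concave logarithm, with weights `p i` at the
points `q i / p i` of the support of `p`. The upper bound holds because the relative entropy is a
`p`-weighted average of the numbers `log (p i / q i)`, each at most the logarithm of their maximum.
-/

open Finset

/-- The min-relative entropy `D_min(p‖q) = -ln (∑_{i : p i > 0} q i)`. -/
noncomputable def Dmin {ι : Type*} [Fintype ι] (p q : ι → ℝ) : ℝ :=
  -Real.log (∑ i ∈ Finset.univ.filter (fun i => 0 < p i), q i)

/-- The max-relative entropy `D_max(p‖q) = ln (max_{i : p i > 0} p i / q i)`. -/
noncomputable def Dmax {ι : Type*} [Fintype ι] (p q : ι → ℝ) : ℝ :=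
  Real.log (sSup {r : ℝ | ∃ i, 0 < p i ∧ r = p i / q i})

open Real

theorem IsProbDist.sum_filter_pos {ι : Type*} [Fintype ι] {p : ι → ℝ} (hp : IsProbDist p) :
    ∑ i ∈ univ.filter (fun i => 0 < p i), p i = 1 := by
  rw [sum_filter_of_ne fun i _ hi => (hp.1 i).lt_of_ne' hi, hp.2]

section WeightedLog

variable {ι : Type*} {s : Finset ι} {p q : ι → ℝ}

theorem neg_log_sum_le_sum_mul_log_div (hp : ∀ i ∈ s, 0 < p i) (hq : ∀ i ∈ s, 0 < q i)
    (hp1 : ∑ i ∈ s, p i = 1) :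
    -log (∑ i ∈ s, q i) ≤ ∑ i ∈ s, p i * log (p i / q i) := by
  have jensen := strictConcaveOn_log_Ioi.concaveOn.le_map_sum (p := fun i => q i / p i)
    (fun i hi => (hp i hi).le) hp1 fun i hi => div_pos (hq i hi) (hp i hi)
  have hmean : ∑ i ∈ s, p i • (q i / p i) = ∑ i ∈ s, q i :=
    sum_congr rfl fun i hi => mul_div_cancel₀ _ (hp i hi).ne'
  have hterm : ∀ i ∈ s, p i • log (q i / p i) = -(p i * log (p i / q i)) := fun i _ => by
    rw [← inv_div, log_inv, smul_eq_mul, mul_neg]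
  rw [hmean, sum_congr rfl hterm, sum_neg_distrib] at jensen
  linarith

theorem sum_mul_log_div_le_log (hp : ∀ i ∈ s, 0 < p i) (hq : ∀ i ∈ s, 0 < q i)
    (hp1 : ∑ i ∈ s, p i = 1) {M : ℝ} (hM : ∀ i ∈ s, p i / q i ≤ M) :
    ∑ i ∈ s, p i * log (p i / q i) ≤ log M :=
  calc ∑ i ∈ s, p i * log (p i / q i) ≤ ∑ i ∈ s, p i * log M :=
        sum_le_sum fun i hi => mul_le_mul_of_nonneg_left
          (log_le_log (div_pos (hp i hi) (hq i hi)) (hM i hi)) (hp i hi).le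
    _ = log M := by rw [← sum_mul, hp1, one_mul]

end WeightedLog

theorem div_le_sSup_ratios {ι : Type*} [Finite ι] (p q : ι → ℝ) {i : ι} (hi : 0 < p i) :
    p i / q i ≤ sSup {r : ℝ | ∃ i, 0 < p i ∧ r = p i / q i} := by
  have hfin : {r : ℝ | ∃ i, 0 < p i ∧ r = p i / q i}.Finite :=
    (Set.finite_range fun i => p i / q i).subset fun r ⟨j, _, hr⟩ => ⟨j, hr.symm⟩
  exact le_csSup hfin.bddAbove ⟨i, hi, rfl⟩

theorem Dmin_le_relEnt_le_Dmax_general {n : ℕ} (p q : Fin n → ℝ)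
    (hp : IsProbDist p) (hpq : ∀ i, 0 < p i → 0 < q i) :
    Dmin p q ≤ ∑ i ∈ Finset.univ.filter (fun i => 0 < p i), p i * Real.log (p i / q i) ∧
    ∑ i ∈ Finset.univ.filter (fun i => 0 < p i), p i * Real.log (p i / q i) ≤ Dmax p q ∧
    Dmin p q ≤ Dmax p q ∧
    ∀ Fβ kT : ℝ, 0 ≤ kT → Fβ + kT * Dmin p q ≤ Fβ + kT * Dmax p q := by
  have hpS : ∀ i ∈ univ.filter (fun i => 0 < p i), 0 < p i := fun i hi => (mem_filter.1 hi).2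
  have hqS : ∀ i ∈ univ.filter (fun i => 0 < p i), 0 < q i := fun i hi => hpq i (hpS i hi)
  have hlower : Dmin p q ≤ _ := neg_log_sum_le_sum_mul_log_div hpS hqS hp.sum_filter_pos
  have hupper : _ ≤ Dmax p q := sum_mul_log_div_le_log hpS hqS hp.sum_filter_pos
    fun i hi => div_le_sSup_ratios p q (hpS i hi)
  refine ⟨hlower, hupper, hlower.trans hupper, fun Fβ kT hkT => ?_⟩
  gcongr
  exact hlower.trans hupper

/-- `D_min ≤` relative entropy `≤ D_max`; in particular the single-shot
free energy `F_min = F_β + kT·D_min` never exceeds `F_max = F_β + kT·D_max`. -/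
theorem Dmin_le_relEnt_le_Dmax {n : ℕ} (p q : Fin n → ℝ)
    (hp : IsProbDist p) (hq : IsProbDist q) (hpq : ∀ i, 0 < p i → 0 < q i) :
    Dmin p q ≤ ∑ i ∈ Finset.univ.filter (fun i => 0 < p i), p i * Real.log (p i / q i) ∧
    ∑ i ∈ Finset.univ.filter (fun i => 0 < p i), p i * Real.log (p i / q i) ≤ Dmax p q ∧
    Dmin p q ≤ Dmax p q ∧
    ∀ Fβ kT : ℝ, 0 ≤ kT → Fβ + kT * Dmin p q ≤ Fβ + kT * Dmax p q :=
  Dmin_le_relEnt_le_Dmax_general p q hp hpq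
end

section
/- D_min is a monotone under Gibbs-preserving stochastic maps: let τ be a probability distribution on Fin n with τ_i > 0 for all i, and let G be a stochastic matrix with Gτ = τ. Then for every probability distribution p on Fin n, D_min(Gp‖τ) ≤ D_min(p‖τ). -/
open Finset

/-- `D_min` is a monotone under Gibbs-preserving stochastic maps. -/
theorem Dmin_monotone {n : ℕ} (τ : Fin n → ℝ) (hτ : IsProbDist τ) (hτpos : ∀ i, 0 < τ i)
    (G : Matrix (Fin n) (Fin n) ℝ) (hG : IsStochastic G) (hGτ : G.mulVec τ = τ)
    (p : Fin n → ℝ) (hp : IsProbDist p) :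
    Dmin (G.mulVec p) τ ≤ Dmin p τ := by
  obtain ⟨hp0, hp1⟩ := hp
  obtain ⟨hG0, hG1⟩ := hG
  set S := Finset.univ.filter (fun i => 0 < p i) with hSdef
  set T := Finset.univ.filter (fun j => 0 < G.mulVec p j) with hTdef
  have hS_ne : S.Nonempty := by
    by_contra h
    rw [Finset.not_nonempty_iff_eq_empty] at h
    have : ∑ i, p i = 0 := by
      apply Finset.sum_eq_zero
      intro i _
      by_contra hpi
      have : i ∈ S := by
        simp only [hSdef, Finset.mem_filter, Finset.mem_univ, true_and]
        exact lt_of_le_of_ne (hp0 i) (Ne.symm hpi)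
      simp [h] at this
    linarith
  have hmv : ∀ j, G.mulVec p j = ∑ i, G j i * p i := by
    intro j; simp [Matrix.mulVec, dotProduct]
  have hGp0 : ∀ j, 0 ≤ G.mulVec p j := fun j => by
    rw [hmv]; exact Finset.sum_nonneg fun i _ => mul_nonneg (hG0 j i) (hp0 i)
  -- for i ∈ S and j ∉ T, G j i = 0
  have hzero : ∀ i ∈ S, ∀ j, j ∉ T → G j i = 0 := by
    intro i hi j hj
    simp only [hTdef, Finset.mem_filter, Finset.mem_univ, true_and, not_lt] at hj
    have hj0 : ∑ k, G j k * p k = 0 := by rw [← hmv]; exact le_antisymm hj (hGp0 j)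
    have hpi : 0 < p i := by
      simpa only [hSdef, Finset.mem_filter, Finset.mem_univ, true_and] using hi
    have : G j i * p i = 0 := by
      have := (Finset.sum_eq_zero_iff_of_nonneg
        (fun k _ => mul_nonneg (hG0 j k) (hp0 k))).mp hj0 i (Finset.mem_univ i)
      exact this
    rcases mul_eq_zero.mp this with h | h
    · exact h
    · exact absurd h (ne_of_gt hpi)
  have hcol : ∀ i ∈ S, ∑ j ∈ T, G j i = 1 := by
    intro i hi
    rw [← hG1 i]
    exact Finset.sum_subset (Finset.subset_univ T) (fun j _ hj => hzero i hi j hj)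
  have key : ∑ i ∈ S, τ i ≤ ∑ j ∈ T, τ j := by
    calc ∑ i ∈ S, τ i = ∑ i ∈ S, (∑ j ∈ T, G j i) * τ i := by
          apply Finset.sum_congr rfl
          intro i hi
          rw [hcol i hi, one_mul]
      _ = ∑ j ∈ T, ∑ i ∈ S, G j i * τ i := by
          rw [Finset.sum_comm]
          simp [Finset.sum_mul]
      _ ≤ ∑ j ∈ T, ∑ i, G j i * τ i := by
          apply Finset.sum_le_sum
          intro j _
          apply Finset.sum_le_sum_of_subset_of_nonneg (Finset.subset_univ S)
          intro i _ _
          exact mul_nonneg (hG0 j i) (le_of_lt (hτpos i))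
      _ = ∑ j ∈ T, τ j := by
          apply Finset.sum_congr rfl
          intro j _
          have := congrFun hGτ j
          simpa [Matrix.mulVec, dotProduct] using this
  have hBpos : 0 < ∑ i ∈ S, τ i :=
    Finset.sum_pos (fun i _ => hτpos i) hS_ne
  unfold Dmin
  apply neg_le_neg
  exact Real.log_le_log hBpos key
end

section
/- D_max is a monotone under Gibbs-preserving stochastic maps: let τ be a probability distribution on Fin n with τ_i > 0 for all i, and let G be a stochastic matrix with Gτ = τ. Then for every probability distribution p on Fin n, D_max(Gp‖τ) ≤ D_max(p‖τ). -/
open Finset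

/-- `D_max` is a monotone under Gibbs-preserving stochastic maps. -/
theorem Dmax_monotone {n : ℕ} (τ : Fin n → ℝ) (hτ : IsProbDist τ) (hτpos : ∀ i, 0 < τ i)
    (G : Matrix (Fin n) (Fin n) ℝ) (hG : IsStochastic G) (hGτ : G.mulVec τ = τ)
    (p : Fin n → ℝ) (hp : IsProbDist p) :
    Dmax (G.mulVec p) τ ≤ Dmax p τ := by
  obtain ⟨hpnn, hpsum⟩ := hp
  obtain ⟨hGnn, hGcol⟩ := hG
  set q := G.mulVec p with hq
  set S : Set ℝ := {r : ℝ | ∃ i, 0 < p i ∧ r = p i / τ i} with hS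
  set T : Set ℝ := {r : ℝ | ∃ i, 0 < q i ∧ r = q i / τ i} with hT
  -- S bounded above (finite)
  have hSfin : S.Finite := by
    apply (Set.finite_range (fun i => p i / τ i)).subset
    rintro r ⟨i, _, rfl⟩; exact ⟨i, rfl⟩
  have hSbdd : BddAbove S := hSfin.bddAbove
  -- p has a positive coordinate
  have hpex : ∃ i, 0 < p i := by
    by_contra h
    push_neg at h
    have : ∑ i, p i = 0 := Finset.sum_eq_zero fun i _ => le_antisymm (h i) (hpnn i)
    rw [hpsum] at this; norm_num at this
  obtain ⟨i₀, hi₀⟩ := hpex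
  set M := sSup S with hM
  have hMmem : ∀ i, 0 < p i → p i / τ i ≤ M := fun i hi => le_csSup hSbdd ⟨i, hi, rfl⟩
  have hMpos : 0 < M :=
    lt_of_lt_of_le (div_pos hi₀ (hτpos i₀)) (hMmem i₀ hi₀)
  -- p i ≤ M * τ i for all i
  have hkey : ∀ i, p i ≤ M * τ i := by
    intro i
    rcases lt_or_eq_of_le (hpnn i) with h | h
    · exact (div_le_iff₀ (hτpos i)).mp (hMmem i h)
    · rw [← h]; exact mul_nonneg hMpos.le (hτpos i).le
  -- q j ≤ M * τ j
  have hqkey : ∀ j, q j ≤ M * τ j := by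
    intro j
    have h1 : q j = ∑ i, G j i * p i := rfl
    have h2 : (G.mulVec τ) j = ∑ i, G j i * τ i := rfl
    have hτj : ∑ i, G j i * τ i = τ j := by rw [← h2, hGτ]
    calc q j = ∑ i, G j i * p i := h1
      _ ≤ ∑ i, G j i * (M * τ i) := by
          apply Finset.sum_le_sum
          intro i _
          exact mul_le_mul_of_nonneg_left (hkey i) (hGnn j i)
      _ = M * ∑ i, G j i * τ i := by rw [Finset.mul_sum]; congr 1; ext i; ring
      _ = M * τ j := by rw [hτj]
  -- elements of T are ≤ M
  have hTle : ∀ r ∈ T, r ≤ M := by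
    rintro r ⟨j, hj, rfl⟩
    rw [div_le_iff₀ (hτpos j)]
    exact hqkey j
  -- q nonneg and q sums to 1, so q has a positive coordinate
  have hqnn : ∀ j, 0 ≤ q j := by
    intro j
    have h1 : q j = ∑ i, G j i * p i := rfl
    rw [h1]
    exact Finset.sum_nonneg fun i _ => mul_nonneg (hGnn j i) (hpnn i)
  have hqsum : ∑ j, q j = 1 := by
    have : ∑ j, q j = ∑ j, ∑ i, G j i * p i := rfl
    rw [this, Finset.sum_comm]
    have : ∀ i, ∑ j, G j i * p i = p i := by
      intro i
      rw [← Finset.sum_mul, hGcol i, one_mul]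
    simp_rw [this]
    exact hpsum
  have hqex : ∃ j, 0 < q j := by
    by_contra h
    push_neg at h
    have : ∑ j, q j = 0 := Finset.sum_eq_zero fun j _ => le_antisymm (h j) (hqnn j)
    rw [hqsum] at this; norm_num at this
  obtain ⟨j₀, hj₀⟩ := hqex
  have hTne : T.Nonempty := ⟨q j₀ / τ j₀, j₀, hj₀, rfl⟩
  have hTsup_le : sSup T ≤ M := csSup_le hTne hTle
  have hTbdd : BddAbove T := ⟨M, hTle⟩
  have hTsup_pos : 0 < sSup T :=
    lt_of_lt_of_le (div_pos hj₀ (hτpos j₀)) (le_csSup hTbdd ⟨j₀, hj₀, rfl⟩)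
  exact Real.log_le_log hTsup_pos hTsup_le
end

section
/- Distillable work criterion: let β > 0, let E : Fin n → ℝ have partition function Z and Gibbs distribution τ, let p be a probability distribution on Fin n, and let W ∈ ℝ. Consider the combined system Fin n × Fin 2 (system plus work qubit) with energies (i, w) ↦ E_i + W·w (w ∈ {0,1}) and its associated Gibbs distribution τ_tot. Then there exists a stochastic matrix G on the combined system with G τ_tot = τ_tot and G(p ⊗ δ_0) = τ ⊗ δ_1 if and only if β·W ≤ D_min(p‖τ). (Thus the extractable work is W_dist = kT·D_min(p‖τ) = F_min(p) − F_min(τ).) -/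
open Finset

/-- The point distribution on `Fin 2` concentrated at `w`. -/
def pointDist (w : Fin 2) : Fin 2 → ℝ := fun x => if x = w then 1 else 0

/-- The energies of system plus work qubit: `(i, w) ↦ E i + W * w`. -/
def workEnergy {n : ℕ} (E : Fin n → ℝ) (W : ℝ) : Fin n × Fin 2 → ℝ :=
  fun x => E x.1 + W * ((x.2 : ℕ) : ℝ)

lemma partZ_work {n : ℕ} (β : ℝ) (E : Fin n → ℝ) (W : ℝ) :
    partZ β (workEnergy E W) = partZ β E * (1 + Real.exp (-(β * W))) := by
  rw [partZ, Fintype.sum_prod_type, partZ, Finset.sum_mul]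
  refine Finset.sum_congr rfl fun i _ => ?_
  rw [Fin.sum_univ_two]
  simp only [workEnergy]
  norm_num
  rw [mul_add, neg_add, Real.exp_add]
  ring

lemma gibbs_work {n : ℕ} (β : ℝ) (E : Fin n → ℝ) (W : ℝ) (x : Fin n × Fin 2) :
    gibbs β (workEnergy E W) x =
      gibbs β E x.1 * (if x.2 = 0 then 1 else Real.exp (-(β * W))) / (1 + Real.exp (-(β * W))) := by
  obtain ⟨i, w⟩ := x
  have h1 : (0:ℝ) < 1 + Real.exp (-(β * W)) := by positivity
  rw [gibbs, gibbs, partZ_work]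
  fin_cases w
  · simp [workEnergy, div_div]
  · simp only [workEnergy]
    norm_num
    rw [mul_add, neg_add, Real.exp_add]
    field_simp

/-- **distillable work.** On the combined system `Fin n × Fin 2` with
energies `(i, w) ↦ E i + W * w` and its Gibbs distribution `τ_tot`, there is a
Gibbs-preserving stochastic matrix mapping `p ⊗ δ₀` to `τ ⊗ δ₁` iff
`β * W ≤ D_min(p‖τ)`. -/
theorem distillable_work_iff {n : ℕ} (β : ℝ) (hβ : 0 < β) (E : Fin n → ℝ)
    (p : Fin n → ℝ) (hp : IsProbDist p) (W : ℝ) :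
    (∃ G : Matrix (Fin n × Fin 2) (Fin n × Fin 2) ℝ, IsStochastic G ∧
        G.mulVec (gibbs β (workEnergy E W)) = gibbs β (workEnergy E W) ∧
        G.mulVec (prodDist p (pointDist 0)) = prodDist (gibbs β E) (pointDist 1)) ↔
      β * W ≤ Dmin p (gibbs β E) := by
  classical
  have hne : Nonempty (Fin n) := by
    by_contra h
    rw [not_nonempty_iff] at h
    have h2 := hp.2
    rw [Finset.univ_eq_empty, Finset.sum_empty] at h2
    norm_num at h2
  set c := Real.exp (-(β * W)) with hc_def
  have hc : 0 < c := Real.exp_pos _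
  have h1c : (0:ℝ) < 1 + c := by positivity
  have hZ : 0 < partZ β E := Finset.sum_pos (fun i _ => Real.exp_pos _) Finset.univ_nonempty
  set τ := gibbs β E with hτ_def
  set τtot := gibbs β (workEnergy E W) with hτtot_def
  have hτpos : ∀ i, 0 < τ i := fun i => div_pos (Real.exp_pos _) hZ
  have hτsum : ∑ i, τ i = 1 := by
    rw [hτ_def]
    simp only [gibbs, ← Finset.sum_div]
    exact div_self hZ.ne'
  set S := Finset.univ.filter (fun i => 0 < p i) with hS_def
  set t := ∑ i ∈ S, τ i with ht_def
  have hSne : S.Nonempty := by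
    by_contra h
    rw [Finset.not_nonempty_iff_eq_empty, Finset.filter_eq_empty_iff] at h
    have : ∑ i, p i = 0 := Finset.sum_eq_zero fun i _ =>
      le_antisymm (not_lt.mp (h (Finset.mem_univ i))) (hp.1 i)
    rw [hp.2] at this; norm_num at this
  have ht0 : 0 < t := Finset.sum_pos (fun i _ => hτpos i) hSne
  have ht1 : t ≤ 1 := by
    rw [ht_def, ← hτsum]
    exact Finset.sum_le_sum_of_subset_of_nonneg (Finset.filter_subset _ _)
      (fun i _ _ => (hτpos i).le)
  have htot : ∀ x : Fin n × Fin 2, τtot x = τ x.1 * (if x.2 = 0 then 1 else c) / (1 + c) :=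
    fun x => gibbs_work β E W x
  have hRHS : (β * W ≤ Dmin p τ) ↔ t ≤ c := by
    rw [Dmin, ← hS_def, ← ht_def, le_neg, Real.log_le_iff_le_exp ht0, ← hc_def]
  rw [hRHS]
  constructor
  · rintro ⟨G, ⟨hGnn, hGcol⟩, hGτ, hGp⟩
    set u := prodDist p (pointDist 0) with hu_def
    have hu_nn : ∀ y : Fin n × Fin 2, 0 ≤ u y := by
      intro y
      rw [hu_def]
      refine mul_nonneg (hp.1 _) ?_
      rw [pointDist]
      split <;> norm_num
    have hu_sum : ∑ y, u y = 1 := by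
      rw [hu_def, Fintype.sum_prod_type]
      simp only [prodDist, pointDist, Fin.sum_univ_two]
      norm_num [hp.2]
    set colw : Fin n × Fin 2 → ℝ := fun y => ∑ j, G (j, 1) y with hcolw_def
    have hcolw_nn : ∀ y, 0 ≤ colw y := fun y => Finset.sum_nonneg fun j _ => hGnn _ _
    have hcolw_le : ∀ y, colw y ≤ 1 := by
      intro y
      have h := hGcol y
      rw [Fintype.sum_prod_type] at h
      simp only [Fin.sum_univ_two] at h
      rw [Finset.sum_add_distrib] at h
      have h0 : 0 ≤ ∑ j, G (j, 0) y := Finset.sum_nonneg fun j _ => hGnn _ _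
      rw [hcolw_def]; dsimp only
      linarith
    have hswap : ∀ f : Fin n × Fin 2 → ℝ, ∑ j, (G.mulVec f) (j, 1) = ∑ y, colw y * f y := by
      intro f
      simp only [Matrix.mulVec, dotProduct]
      rw [Finset.sum_comm]
      refine Finset.sum_congr rfl fun y _ => ?_
      rw [hcolw_def]; dsimp only
      rw [Finset.sum_mul]
    have h1 : ∑ y, colw y * u y = 1 := by
      rw [← hswap u, hGp]
      simp only [prodDist, pointDist]
      norm_num [hτsum]
    have hz : ∑ y, u y * (1 - colw y) = 0 := by
      have e : ∑ y, u y * (1 - colw y) = ∑ y, u y - ∑ y, colw y * u y := by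
        rw [← Finset.sum_sub_distrib]
        exact Finset.sum_congr rfl fun y _ => by ring
      rw [e, hu_sum, h1, sub_self]
    have key : ∀ y : Fin n × Fin 2, 0 < u y → colw y = 1 := by
      intro y hy
      have h0 := (Finset.sum_eq_zero_iff_of_nonneg
        (fun y _ => mul_nonneg (hu_nn y) (sub_nonneg.mpr (hcolw_le y)))).mp hz y
        (Finset.mem_univ y)
      rcases mul_eq_zero.mp h0 with h' | h'
      · exact absurd h' hy.ne'
      · linarith
    have h2 : ∑ y, colw y * τtot y = c / (1 + c) := by
      rw [← hswap τtot, hGτ]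
      have e : ∀ j : Fin n, τtot (j, 1) = τ j * (c / (1 + c)) := by
        intro j
        rw [htot (j, 1)]
        norm_num
        ring
      rw [Finset.sum_congr rfl fun j _ => e j, ← Finset.sum_mul, hτsum, one_mul]
    have hτtot_nn : ∀ y, 0 ≤ τtot y := by
      intro y
      rw [htot y]
      refine div_nonneg (mul_nonneg (hτpos _).le ?_) h1c.le
      split
      · norm_num
      · exact hc.le
    have hsub : ∑ y ∈ S ×ˢ {(0 : Fin 2)}, colw y * τtot y ≤ ∑ y, colw y * τtot y :=
      Finset.sum_le_sum_of_subset_of_nonneg (Finset.subset_univ _)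
        (fun y _ _ => mul_nonneg (hcolw_nn y) (hτtot_nn y))
    have heq : ∑ y ∈ S ×ˢ {(0 : Fin 2)}, colw y * τtot y = t / (1 + c) := by
      rw [Finset.sum_product]
      simp only [Finset.sum_singleton]
      have e : ∀ i ∈ S, colw (i, 0) * τtot (i, 0) = τ i / (1 + c) := by
        intro i hi
        rw [hS_def, Finset.mem_filter] at hi
        have hu_pos : 0 < u (i, (0 : Fin 2)) := by
          rw [hu_def]
          show 0 < p i * pointDist 0 0
          rw [pointDist]
          norm_num
          exact hi.2
        rw [key _ hu_pos, one_mul, htot (i, 0)]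
        norm_num
      rw [Finset.sum_congr rfl e, ← Finset.sum_div, ← ht_def]
    rw [heq, h2] at hsub
    exact (div_le_div_iff_of_pos_right h1c).mp hsub
  · intro htc
    have hct : 0 ≤ c - t := by linarith
    set d := 1 + c - t with hd_def
    have hd : 0 < d := by rw [hd_def]; linarith
    set A : Fin n × Fin 2 → ℝ := fun x => τ x.1 * (if x.2 = 1 then 1 else 0) with hA_def
    set v : Fin n × Fin 2 → ℝ := fun x => τ x.1 * (if x.2 = 0 then 1 else c - t) / d with hv_def
    have hA_nn : ∀ x, 0 ≤ A x := by
      intro x; rw [hA_def]; dsimp only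
      split
      · simp [(hτpos _).le]
      · simp
    have hv_nn : ∀ x, 0 ≤ v x := by
      intro x; rw [hv_def]; dsimp only
      refine div_nonneg (mul_nonneg (hτpos _).le ?_) hd.le
      split
      · norm_num
      · exact hct
    have hA_sum : ∑ x, A x = 1 := by
      rw [Fintype.sum_prod_type]
      simp only [hA_def, Fin.sum_univ_two]
      norm_num [hτsum]
    have hv_sum : ∑ x, v x = 1 := by
      rw [Fintype.sum_prod_type]
      simp only [hv_def, Fin.sum_univ_two]
      norm_num
      have : ∀ i : Fin n, τ i / d + τ i * (c - t) / d = τ i := by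
        intro i; field_simp; rw [hd_def]; ring
      rw [Finset.sum_congr rfl fun i _ => this i, hτsum]
    have hτnotS : ∑ i ∈ Finset.univ.filter (fun i => ¬ 0 < p i), τ i = 1 - t := by
      have h := Finset.sum_filter_add_sum_filter_not Finset.univ (fun i => 0 < p i) τ
      rw [hτsum, ← hS_def, ← ht_def] at h
      linarith
    refine ⟨Matrix.of fun x y => if y.2 = 0 ∧ 0 < p y.1 then A x else v x, ⟨?_, ?_⟩, ?_, ?_⟩
    · intro x y
      dsimp only [Matrix.of_apply]
      split
      · exact hA_nn x
      · exact hv_nn x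
    · intro y
      by_cases h : y.2 = 0 ∧ 0 < p y.1 <;> simp only [Matrix.of_apply, h, if_true, if_false,
        if_pos, if_neg, hA_sum, hv_sum] <;> simp [h, hA_sum, hv_sum]
    · funext x
      show ∑ y, (if y.2 = 0 ∧ 0 < p y.1 then A x else v x) * τtot y = τtot x
      rw [Fintype.sum_prod_type]
      simp only [Fin.sum_univ_two]
      norm_num
      have step : ∀ i : Fin n,
          (if 0 < p i then A x * τtot (i, 0) else v x * τtot (i, 0)) + v x * τtot (i, 1)
          = v x * (τ i * c / (1 + c))
            + (if 0 < p i then A x * (τ i / (1 + c)) else v x * (τ i / (1 + c))) := by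
        intro i
        rw [htot (i, 0), htot (i, 1)]
        norm_num
        by_cases hi : 0 < p i
        · rw [if_pos hi]; ring
        · rw [if_neg hi]; ring
      rw [Finset.sum_congr rfl fun i _ => step i, Finset.sum_add_distrib, Finset.sum_ite]
      have s1 : ∑ i : Fin n, v x * (τ i * c / (1 + c)) = v x * (c / (1 + c)) := by
        rw [← Finset.mul_sum]
        congr 1
        rw [← Finset.sum_div, ← Finset.sum_mul, hτsum, one_mul]
      have s2 : ∑ i ∈ Finset.univ.filter (fun i => 0 < p i), A x * (τ i / (1 + c))
          = A x * (t / (1 + c)) := by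
        rw [← Finset.mul_sum, ← Finset.sum_div, ← hS_def, ← ht_def]
      have s3 : ∑ i ∈ Finset.univ.filter (fun i => ¬ 0 < p i), v x * (τ i / (1 + c))
          = v x * ((1 - t) / (1 + c)) := by
        rw [← Finset.mul_sum, ← Finset.sum_div, hτnotS]
      rw [s1, s2, s3, htot x]
      obtain ⟨j, w⟩ := x
      rw [hA_def, hv_def]
      dsimp only
      fin_cases w
      · norm_num
        field_simp
        rw [hd_def]
        ring
      · norm_num
        field_simp
        rw [hd_def]
        ring
    · funext x
      show ∑ y, (if y.2 = 0 ∧ 0 < p y.1 then A x else v x) * prodDist p (pointDist 0) y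
          = prodDist τ (pointDist 1) x
      rw [Fintype.sum_prod_type]
      simp only [Fin.sum_univ_two, prodDist, pointDist]
      norm_num
      have : ∀ i : Fin n, (if 0 < p i then A x * p i else v x * p i) = A x * p i := by
        intro i
        by_cases hi : 0 < p i
        · rw [if_pos hi]
        · rw [if_neg hi, le_antisymm (not_lt.mp hi) (hp.1 i)]; ring
      rw [Finset.sum_congr rfl fun i _ => this i, ← Finset.mul_sum, hp.2, mul_one, hA_def]
      dsimp only
      rw [mul_ite, mul_one, mul_zero]
end

section
/- Fixed-total-energy block structure (classical form of Theorem 1): let β > 0 and 0 ≤ δ < 1. Let ℰ_R ⊂ ℝ be a finite set of reservoir energies with degeneracies g_R : ℰ_R → ℕ_{>0}, let E_S : Fin m → ℝ be system energies, and let p be a probability distribution on Fin m. Fix a total energy value E with E ∈ ℰ_R and E − E_S(s) ∈ ℰ_R for every s, and assume |g_R(E)·exp(−β E_S(s))/g_R(E − E_S(s)) − 1| ≤ δ for every s. On the sample space Ω = {(s, j) : s ∈ Fin m, j ∈ Fin(g_R(E − E_S(s)))} define the conditional distribution μ(s, j) = exp(−β(E − E_S(s)))·p_s / N, where N = Σ_{s′}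 g_R(E − E_S(s′))·exp(−β(E − E_S(s′)))·p_{s′}, and the target distribution ν(s, j) = p_s / g_R(E − E_S(s)). Then the ℓ¹ distance satisfies Σ_{(s,j)∈Ω} |μ(s,j) − ν(s,j)| ≤ 2δ/(1−δ). -/
open Finset

/-- **classical form of Theorem 1: fixed-total-energy block structure.**
On the sample space `Ω = Σ s, Fin (g (E - E_S s))` of pairs (system state, compatible
reservoir microstate), the Gibbs-weighted conditional distribution
`μ (s, j) = exp (-β (E - E_S s)) p s / N` is within `ℓ¹` distance `2δ/(1-δ)` of the
target `ν (s, j) = p s / g (E - E_S s)`. -/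
theorem block_structure_l1_bound {m : ℕ} (β : ℝ) (hβ : 0 < β)
    (δ : ℝ) (hδ0 : 0 ≤ δ) (hδ1 : δ < 1)
    (ER : Finset ℝ) (g : ℝ → ℕ) (hg : ∀ e ∈ ER, 0 < g e)
    (ES : Fin m → ℝ) (p : Fin m → ℝ) (hp : IsProbDist p)
    (Etot : ℝ) (hEtot : Etot ∈ ER) (hEs : ∀ s, Etot - ES s ∈ ER)
    (happrox : ∀ s,
      |(g Etot : ℝ) * Real.exp (-(β * ES s)) / (g (Etot - ES s) : ℝ) - 1| ≤ δ) :
    ∑ ω : Σ s : Fin m, Fin (g (Etot - ES s)),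
        |Real.exp (-(β * (Etot - ES ω.1))) * p ω.1 /
            (∑ s', (g (Etot - ES s') : ℝ) * Real.exp (-(β * (Etot - ES s'))) * p s') -
          p ω.1 / (g (Etot - ES ω.1) : ℝ)| ≤
      2 * δ / (1 - δ) := by
  obtain ⟨hp0, hp1⟩ := hp
  set G : Fin m → ℝ := fun s => (g (Etot - ES s) : ℝ) with hGdef
  set w : Fin m → ℝ := fun s => Real.exp (-(β * (Etot - ES s))) with hwdef
  set N : ℝ := ∑ s', (g (Etot - ES s') : ℝ) * Real.exp (-(β * (Etot - ES s'))) * p s' with hNdef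
  set D : ℝ := (g Etot : ℝ) * Real.exp (-(β * Etot)) with hDdef
  have hGpos : ∀ s, 0 < G s := fun s => by
    simp only [hGdef]; exact_mod_cast hg _ (hEs s)
  have hwpos : ∀ s, 0 < w s := fun s => Real.exp_pos _
  have hDpos : 0 < D := mul_pos (by exact_mod_cast hg _ hEtot) (Real.exp_pos _)
  have h1δ : 0 < 1 - δ := by linarith
  have h1δ' : 0 < 1 + δ := by linarith
  have hbounds : ∀ s, D / (1 + δ) ≤ G s * w s ∧ G s * w s ≤ D / (1 - δ) := by
    intro s
    have h := abs_le.1 (happrox s)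
    have hGs := hGpos s
    have key : (g Etot : ℝ) * Real.exp (-(β * ES s)) * w s = D := by
      rw [hwdef, hDdef]
      simp only []
      rw [mul_assoc, ← Real.exp_add]
      ring_nf
    have hlo : (1 - δ) * G s ≤ (g Etot : ℝ) * Real.exp (-(β * ES s)) :=
      (le_div_iff₀ hGs).1 (by linarith [h.1])
    have hhi : (g Etot : ℝ) * Real.exp (-(β * ES s)) ≤ (1 + δ) * G s :=
      (div_le_iff₀ hGs).1 (by linarith [h.2])
    constructor
    · rw [div_le_iff₀ h1δ']
      calc D = (g Etot : ℝ) * Real.exp (-(β * ES s)) * w s := key.symm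
        _ ≤ (1 + δ) * G s * w s := by
            exact mul_le_mul_of_nonneg_right hhi (hwpos s).le
        _ = G s * w s * (1 + δ) := by ring
    · rw [le_div_iff₀ h1δ]
      calc G s * w s * (1 - δ) = (1 - δ) * G s * w s := by ring
        _ ≤ (g Etot : ℝ) * Real.exp (-(β * ES s)) * w s := by
            exact mul_le_mul_of_nonneg_right hlo (hwpos s).le
        _ = D := key
  have hNlo : D / (1 + δ) ≤ N := by
    calc D / (1 + δ) = ∑ s, p s * (D / (1 + δ)) := by
          rw [← Finset.sum_mul, hp1, one_mul]
      _ ≤ N := by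
          rw [hNdef]
          apply Finset.sum_le_sum
          intro s _
          have := (hbounds s).1
          calc p s * (D / (1 + δ)) ≤ p s * (G s * w s) := by
                exact mul_le_mul_of_nonneg_left this (hp0 s)
            _ = (g (Etot - ES s) : ℝ) * Real.exp (-(β * (Etot - ES s))) * p s := by
                rw [hGdef, hwdef]; ring
  have hNhi : N ≤ D / (1 - δ) := by
    calc N ≤ ∑ s, p s * (D / (1 - δ)) := by
          rw [hNdef]
          apply Finset.sum_le_sum
          intro s _
          have := (hbounds s).2
          calc (g (Etot - ES s) : ℝ) * Real.exp (-(β * (Etot - ES s))) * p s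
              = p s * (G s * w s) := by rw [hGdef, hwdef]; ring
            _ ≤ p s * (D / (1 - δ)) := mul_le_mul_of_nonneg_left this (hp0 s)
      _ = D / (1 - δ) := by rw [← Finset.sum_mul, hp1, one_mul]
  have hNpos : 0 < N := lt_of_lt_of_le (div_pos hDpos h1δ') hNlo
  have key : ∀ s, G s * |w s * p s / N - p s / G s| ≤ p s * (2 * δ / (1 - δ)) := by
    intro s
    have hGs := hGpos s
    have e0 : G s * |w s * p s / N - p s / G s|
        = |G s * (w s * p s / N - p s / G s)| := by
      rw [abs_mul, abs_of_pos hGs]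
    have e1 : G s * (w s * p s / N - p s / G s) = p s * ((G s * w s - N) / N) := by
      field_simp
    rw [e0, e1, abs_mul, abs_of_nonneg (hp0 s), abs_div, abs_of_pos hNpos]
    apply mul_le_mul_of_nonneg_left _ (hp0 s)
    have habs : |G s * w s - N| ≤ D / (1 - δ) - D / (1 + δ) := by
      have h1 := (hbounds s).1
      have h2 := (hbounds s).2
      rw [abs_le]
      constructor <;> linarith
    calc |G s * w s - N| / N ≤ (D / (1 - δ) - D / (1 + δ)) / (D / (1 + δ)) := by
          apply div_le_div₀ _ habs (div_pos hDpos h1δ') hNlo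
          have : |G s * w s - N| ≤ D / (1 - δ) - D / (1 + δ) := habs
          linarith [abs_nonneg (G s * w s - N)]
      _ = 2 * δ / (1 - δ) := by
          field_simp
          ring
  calc ∑ ω : Σ s : Fin m, Fin (g (Etot - ES s)),
        |Real.exp (-(β * (Etot - ES ω.1))) * p ω.1 / N - p ω.1 / (g (Etot - ES ω.1) : ℝ)|
      = ∑ s, ∑ _j : Fin (g (Etot - ES s)), |w s * p s / N - p s / G s| := by
        rw [← Finset.univ_sigma_univ, Finset.sum_sigma]
    _ = ∑ s, G s * |w s * p s / N - p s / G s| := by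
        apply Finset.sum_congr rfl
        intro s _
        rw [Finset.sum_const, Finset.card_univ, Fintype.card_fin, nsmul_eq_mul]
    _ ≤ ∑ s, p s * (2 * δ / (1 - δ)) := Finset.sum_le_sum (fun s _ => key s)
    _ = 2 * δ / (1 - δ) := by rw [← Finset.sum_mul, hp1, one_mul]
end

section
/- Thermo-majorization is equivalent to majorization of the blown-up eigenvalue vectors: let β > 0, E : Fin n → ℝ, and suppose M > 0 is such that d_i := M·exp(−β E_i) is a positive integer for every i. For probability distributions p, q on Fin n, let u be the vector of length Σ_i d_i whose entries are p_i/d_i each repeated d_i times, and let v be the corresponding vector built from q. Then u majorizes v (for every k, the sum of the k largest entries of u is at least the sum of the k largest entries of v) if and only if p thermo-majorizes q, i.e. f_p(x) ≥ f_q(x) for all x ∈ [0, Z]. -/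
open Finset

/-- The sum of the `k` largest entries of `u`: the supremum of `∑ i ∈ A, u i` over
subsets `A` of cardinality `k`. -/
noncomputable def topSum {ι : Type*} [Fintype ι] (u : ι → ℝ) (k : ℕ) : ℝ :=
  sSup ((fun A : Finset ι => ∑ i ∈ A, u i) '' {A : Finset ι | A.card = k})

/-- `u` majorizes `v`: for every `k`, the sum of the `k` largest entries of `u` is at
least the sum of the `k` largest entries of `v`. -/
def Majorizes {ι : Type*} [Fintype ι] (u v : ι → ℝ) : Prop :=
  ∀ k : ℕ, topSum v k ≤ topSum u k


/-!
Since `exp (-β E i) = d i / M`, every elbow of a thermo-majorization curve lies on the grid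
`ℕ / M`, and on the segment of `π j` the curve has slope `M * (p (π j) / d (π j))`. Listing the
blow-up of `p` block by block along a β-ordering therefore lists it in non-increasing order, so
the value of the curve at `k / M` is the sum of the `k` largest blown-up entries. Both curves
being affine between consecutive grid points, comparing them on `[0, Z]` amounts to comparing
them at the points `k / M`, which is majorization of the blow-ups.
-/

theorem Finset.sum_le_sum_of_card_eq_of_forall_le {α M : Type*} [AddCommMonoid M] [LinearOrder M]
    [IsOrderedAddMonoid M] {s t : Finset α} {f : α → M} (hst : #s = #t)
    (h : ∀ a ∈ s, ∀ b ∈ t, f a ≤ f b) : ∑ a ∈ s, f a ≤ ∑ b ∈ t, f b := by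
  rcases s.eq_empty_or_nonempty with rfl | hs
  · rw [card_empty, eq_comm, card_eq_zero] at hst
    simp [hst]
  obtain ⟨a, ha, hmax⟩ := s.exists_max_image f hs
  calc ∑ a ∈ s, f a ≤ #s • f a := sum_le_card_nsmul _ _ _ hmax
    _ = #t • f a := by rw [hst]
    _ ≤ ∑ b ∈ t, f b := card_nsmul_le_sum _ _ _ (h a ha)

section TopSum

variable {ι : Type*} [Fintype ι]

theorem topSum_eq_sum_of_forall_le {u : ι → ℝ} {k : ℕ} (s : Finset ι) (hs : #s = k)
    (h : ∀ a ∈ s, ∀ b ∉ s, u b ≤ u a) : topSum u k = ∑ a ∈ s, u a := by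
  classical
  refine IsGreatest.csSup_eq ⟨⟨s, hs, rfl⟩, ?_⟩
  rintro _ ⟨A, hA : #A = k, rfl⟩
  dsimp only
  rw [← sum_inter_add_sum_sdiff A s, ← sum_inter_add_sum_sdiff s A, inter_comm]
  gcongr 1
  refine sum_le_sum_of_card_eq_of_forall_le (card_sdiff_comm (hA.trans hs.symm)) ?_
  intro b hb a ha
  exact h a (mem_sdiff.1 ha).1 b (mem_sdiff.1 hb).2

theorem topSum_of_card_lt (u : ι → ℝ) {k : ℕ} (hk : Fintype.card ι < k) : topSum u k = 0 := by
  have : {A : Finset ι | #A = k} = ∅ :=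
    Set.eq_empty_of_forall_notMem fun A hA => (card_le_univ A).not_gt (hA ▸ hk)
  rw [topSum, this, Set.image_empty, Real.sSup_empty]

end TopSum

section BlowUp

variable {n : ℕ}

noncomputable def blowup (d : Fin n → ℕ) (p : Fin n → ℝ) (x : Σ i : Fin n, Fin (d i)) : ℝ :=
  p x.1 / d x.1

theorem sum_blowup {d : Fin n → ℕ} (hd : ∀ i, d i ≠ 0) (p : Fin n → ℝ) :
    ∑ x, blowup d p x = ∑ i, p i := by
  refine (Fintype.sum_sigma _).trans (sum_congr rfl fun i _ => ?_)
  have hdi : (d i : ℝ) ≠ 0 := Nat.cast_ne_zero.2 (hd i)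
  simp [blowup, mul_div_cancel₀ _ hdi]

variable (d : Fin n → ℕ) (π : Equiv.Perm (Fin n))

/-- In the blow-up listed block by block in the order `π`, the block `⟨π j, ·⟩` starts at
position `blockStart d π j`; `blowupPrefix d π k` is the set of the first `k` entries. -/
def blockStart (k : ℕ) : ℕ :=
  ∑ i : Fin n, if (i : ℕ) < k then d (π i) else 0

def blowupPrefix (k : ℕ) : Finset (Σ i : Fin n, Fin (d i)) :=
  {x | blockStart d π (π.symm x.1) + x.2 < k}

theorem blockStart_mono : Monotone (blockStart d π) := fun a b hab =>
  sum_le_sum fun i _ => by split_ifs <;> omega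

theorem blockStart_zero : blockStart d π 0 = 0 := by
  simp [blockStart]

theorem blockStart_succ (j : Fin n) :
    blockStart d π (j + 1) = blockStart d π j + d (π j) := by
  rw [blockStart, blockStart, ← Fintype.sum_ite_eq' j (fun i => d (π i)), ← sum_add_distrib]
  refine sum_congr rfl fun i _ => ?_
  simp only [Fin.ext_iff]
  split_ifs <;> omega

theorem blockStart_of_le {k : ℕ} (hk : n ≤ k) : blockStart d π k = ∑ i, d i := by
  rw [blockStart, ← Equiv.sum_comp π d]
  exact sum_congr rfl fun i _ => if_pos (i.2.trans_le hk)

theorem card_filter_add_lt (m a k : ℕ) : #{t : Fin m | a + t < k} = min m (k - a) := by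
  simp_rw [show ∀ t : ℕ, a + t < k ↔ t < k - a by omega]
  exact Fin.card_filter_val_lt

theorem sum_blowupPrefix {M : Type*} [AddCommMonoid M] (k : ℕ) (g : Fin n → M) :
    ∑ x ∈ blowupPrefix d π k, g x.1 =
      ∑ j, min (d (π j)) (k - blockStart d π j) • g (π j) := by
  rw [blowupPrefix, sum_filter, Fintype.sum_sigma, ← Equiv.sum_comp π]
  refine sum_congr rfl fun j _ => ?_
  simp only [Equiv.symm_apply_apply]
  rw [← sum_filter, sum_const, card_filter_add_lt]

theorem card_blowupPrefix (k : ℕ) : #(blowupPrefix d π k) = min k (∑ i, d i) := by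
  have hmono : Monotone fun j => min k (blockStart d π j) :=
    fun a b hab => min_le_min_left k (blockStart_mono d π hab)
  calc #(blowupPrefix d π k) = ∑ j : Fin n, min (d (π j)) (k - blockStart d π j) := by
        rw [card_eq_sum_ones, sum_blowupPrefix d π k (fun _ => 1)]
        simp
    _ = ∑ j : Fin n, (min k (blockStart d π (j + 1)) - min k (blockStart d π j)) := by
        refine sum_congr rfl fun j _ => ?_
        rw [blockStart_succ]
        omega
    _ = min k (∑ i, d i) := by
        rw [Fin.sum_univ_eq_sum_range (fun j => min k (blockStart d π (j + 1)) -
          min k (blockStart d π j)), sum_range_tsub hmono, blockStart_zero,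
          blockStart_of_le d π le_rfl]
        simp

theorem blowupPrefix_eq_univ {k : ℕ} (hk : ∑ i, d i ≤ k) : blowupPrefix d π k = univ :=
  eq_univ_of_card _ (by simp [card_blowupPrefix, hk])

theorem symm_le_symm_of_mem_blowupPrefix {k : ℕ} {x y : Σ i : Fin n, Fin (d i)}
    (hx : x ∈ blowupPrefix d π k) (hy : y ∉ blowupPrefix d π k) : π.symm x.1 ≤ π.symm y.1 := by
  simp only [blowupPrefix, mem_filter, mem_univ, true_and, not_lt] at hx hy
  by_contra! hlt
  have hyx : blockStart d π (π.symm y.1 + 1) ≤ blockStart d π (π.symm x.1) :=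
    blockStart_mono d π (Nat.succ_le_of_lt hlt)
  have hyd : (y.2 : ℕ) < d (π (π.symm y.1)) := by simp
  rw [blockStart_succ] at hyx
  omega

end BlowUp

theorem max_zero_min_sub_interp {a b l r y : ℝ} (hly : l ≤ y) (hyr : y ≤ r)
    (ha : a ≤ l ∨ r ≤ a) (hb : b ≤ l ∨ r ≤ b) :
    (r - l) * max 0 (min y b - a) =
      (r - y) * max 0 (min l b - a) + (y - l) * max 0 (min r b - a) := by
  rcases hb with hb | hb
  · rw [min_eq_right (hb.trans hly), min_eq_right hb, min_eq_right (hb.trans (hly.trans hyr))]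
    ring
  rw [min_eq_left (hyr.trans hb), min_eq_left ((hly.trans hyr).trans hb), min_eq_left hb]
  rcases ha with ha | ha
  · rw [max_eq_right (by linarith), max_eq_right (by linarith), max_eq_right (by linarith)]
    ring
  · rw [max_eq_left (by linarith), max_eq_left (by linarith), max_eq_left (by linarith)]
    ring

theorem natCast_min_tsub (a b k : ℕ) :
    ((min a (k - b) : ℕ) : ℝ) = max 0 (min (k : ℝ) (b + a) - b) := by
  rcases le_total k b with h | h
  · have : (k : ℝ) ≤ b := by exact_mod_cast h
    rw [Nat.sub_eq_zero_of_le h, Nat.min_zero, Nat.cast_zero, eq_comm, max_eq_left]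
    linarith [min_le_left (k : ℝ) (b + a)]
  · have : (b : ℝ) ≤ k := by exact_mod_cast h
    rw [Nat.cast_min, Nat.cast_sub h, ← min_sub_sub_right, add_sub_cancel_left, min_comm,
      max_eq_right (le_min (sub_nonneg.2 this) (Nat.cast_nonneg a))]

section Thermo

variable {n : ℕ} {β : ℝ} {E : Fin n → ℝ} {M : ℝ} {d : Fin n → ℕ}

theorem exp_neg_eq_div (hM : M ≠ 0) (hdM : ∀ i, (d i : ℝ) = M * Real.exp (-(β * E i)))
    (i : Fin n) : Real.exp (-(β * E i)) = d i / M := by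
  rw [hdM i, mul_div_cancel_left₀ _ hM]

theorem exp_eq_div (hM : M ≠ 0) (hdM : ∀ i, (d i : ℝ) = M * Real.exp (-(β * E i)))
    (i : Fin n) : Real.exp (β * E i) = M / d i := by
  rw [← inv_div, ← exp_neg_eq_div hM hdM, Real.exp_neg, inv_inv]

theorem partZ_eq (hM : M ≠ 0) (hdM : ∀ i, (d i : ℝ) = M * Real.exp (-(β * E i))) :
    partZ β E = (∑ i, d i : ℕ) / M := by
  simp only [partZ, exp_neg_eq_div hM hdM, ← sum_div, Nat.cast_sum]

theorem elbowX_eq (hM : M ≠ 0) (hdM : ∀ i, (d i : ℝ) = M * Real.exp (-(β * E i)))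
    (π : Equiv.Perm (Fin n)) (k : ℕ) : elbowX β E π k = blockStart d π k / M := by
  simp only [elbowX, blockStart, Nat.cast_sum, Nat.cast_ite, Nat.cast_zero, sum_div,
    exp_neg_eq_div hM hdM]
  exact sum_congr rfl fun i _ => by split_ifs <;> simp

theorem tmCurve_div_eq (hM : 0 < M) (hdM : ∀ i, (d i : ℝ) = M * Real.exp (-(β * E i)))
    (p : Fin n → ℝ) (π : Equiv.Perm (Fin n)) (y : ℝ) :
    tmCurve β E p π (y / M) = ∑ j, p (π j) / d (π j) *
      max 0 (min y (blockStart d π (j + 1)) - blockStart d π j) := by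
  have hmax (z : ℝ) : max 0 (z / M) = max 0 z / M := by
    rw [← max_div_div_right hM.le, zero_div]
  refine sum_congr rfl fun j _ => ?_
  rw [elbowX_eq hM.ne' hdM, elbowX_eq hM.ne' hdM, exp_eq_div hM.ne' hdM,
    min_div_div_right hM.le, ← sub_div, hmax]
  field_simp

theorem tmCurve_natCast_div (hM : 0 < M) (hdM : ∀ i, (d i : ℝ) = M * Real.exp (-(β * E i)))
    (p : Fin n → ℝ) (π : Equiv.Perm (Fin n)) (k : ℕ) :
    tmCurve β E p π (k / M) = ∑ x ∈ blowupPrefix d π k, blowup d p x := by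
  rw [tmCurve_div_eq hM hdM]
  refine Eq.trans ?_ (sum_blowupPrefix d π k fun i => p i / d i).symm
  refine sum_congr rfl fun j _ => ?_
  rw [nsmul_eq_mul, blockStart_succ, Nat.cast_add, natCast_min_tsub, mul_comm]

theorem tmCurve_natCast_div_of_le (hM : 0 < M)
    (hdM : ∀ i, (d i : ℝ) = M * Real.exp (-(β * E i))) (p : Fin n → ℝ)
    (π : Equiv.Perm (Fin n)) {k : ℕ} (hk : ∑ i, d i ≤ k) :
    tmCurve β E p π (k / M) = ∑ i, p i := by
  have hd (i : Fin n) : d i ≠ 0 := by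
    have : (0 : ℝ) < d i := hdM i ▸ by positivity
    exact_mod_cast this.ne'
  rw [tmCurve_natCast_div hM hdM, blowupPrefix_eq_univ d π hk, sum_blowup hd]

theorem tmCurve_div_interp (hM : 0 < M) (hdM : ∀ i, (d i : ℝ) = M * Real.exp (-(β * E i)))
    (p : Fin n → ℝ) (π : Equiv.Perm (Fin n)) {m : ℕ} {y : ℝ} (hmy : m ≤ y) (hym : y ≤ m + 1) :
    tmCurve β E p π (y / M) =
      (m + 1 - y) * tmCurve β E p π (m / M) + (y - m) * tmCurve β E p π ((m + 1) / M) := by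
  have hgrid (a : ℕ) : (a : ℝ) ≤ m ∨ (m : ℝ) + 1 ≤ a := by
    rcases le_or_gt a m with h | h
    · exact Or.inl (by exact_mod_cast h)
    · exact Or.inr (by exact_mod_cast h)
  simp only [tmCurve_div_eq hM hdM, mul_sum, ← sum_add_distrib]
  refine sum_congr rfl fun j _ => ?_
  have := max_zero_min_sub_interp hmy hym (hgrid (blockStart d π j))
    (hgrid (blockStart d π (j + 1)))
  rw [add_sub_cancel_left, one_mul] at this
  rw [this]
  ring

theorem tmCurve_le_tmCurve_of_natCast_div (hM : 0 < M)
    (hdM : ∀ i, (d i : ℝ) = M * Real.exp (-(β * E i))) {p q : Fin n → ℝ}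
    {π σ : Equiv.Perm (Fin n)} (h : ∀ k : ℕ, tmCurve β E q σ (k / M) ≤ tmCurve β E p π (k / M))
    {x : ℝ} (hx : 0 ≤ x) : tmCurve β E q σ x ≤ tmCurve β E p π x := by
  set y := M * x with hy
  have hxy : x = y / M := by rw [hy, mul_div_cancel_left₀ x hM.ne']
  have hmy : (⌊y⌋₊ : ℝ) ≤ y := Nat.floor_le (by positivity)
  have hym : y ≤ ⌊y⌋₊ + 1 := (Nat.lt_floor_add_one y).le
  have hsucc := h (⌊y⌋₊ + 1)
  push_cast at hsucc
  rw [hxy, tmCurve_div_interp hM hdM q σ hmy hym, tmCurve_div_interp hM hdM p π hmy hym]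
  exact add_le_add (mul_le_mul_of_nonneg_left (h _) (by linarith))
    (mul_le_mul_of_nonneg_left hsucc (by linarith))

theorem exists_isBetaOrdering (β : ℝ) (E p : Fin n → ℝ) : ∃ π, IsBetaOrdering β E p π := by
  let slope i := p i * Real.exp (β * E i)
  exact ⟨Tuple.sort (-slope), fun _ _ hkl => neg_le_neg_iff.1 (Tuple.monotone_sort (-slope) hkl)⟩

theorem IsBetaOrdering.div_le_div (hM : 0 < M)
    (hdM : ∀ i, (d i : ℝ) = M * Real.exp (-(β * E i))) {p : Fin n → ℝ}
    {π : Equiv.Perm (Fin n)} (hπ : IsBetaOrdering β E p π) {j j' : Fin n} (h : j ≤ j') :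
    p (π j') / d (π j') ≤ p (π j) / d (π j) := by
  have := hπ j j' h
  rw [exp_eq_div hM.ne' hdM, exp_eq_div hM.ne' hdM, mul_div_left_comm,
    mul_div_left_comm (p (π j))] at this
  exact le_of_mul_le_mul_left this hM

theorem topSum_blowup (hM : 0 < M) (hdM : ∀ i, (d i : ℝ) = M * Real.exp (-(β * E i)))
    {p : Fin n → ℝ} {π : Equiv.Perm (Fin n)} (hπ : IsBetaOrdering β E p π) {k : ℕ}
    (hk : k ≤ ∑ i, d i) : topSum (blowup d p) k = tmCurve β E p π (k / M) := by
  rw [tmCurve_natCast_div hM hdM]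
  refine topSum_eq_sum_of_forall_le _ (by rw [card_blowupPrefix, min_eq_left hk]) ?_
  intro x hx y hy
  simpa [blowup] using hπ.div_le_div hM hdM (symm_le_symm_of_mem_blowupPrefix d π hx hy)

end Thermo

theorem blowup_majorizes_iff_thermoMajorizes_general {n : ℕ} (β : ℝ)
    (E : Fin n → ℝ) (M : ℝ) (hM : 0 < M) (d : Fin n → ℕ)
    (hdM : ∀ i, (d i : ℝ) = M * Real.exp (-(β * E i)))
    (p q : Fin n → ℝ) (hp : IsProbDist p) (hq : IsProbDist q) :
    Majorizes (fun x : Σ i : Fin n, Fin (d i) => p x.1 / (d x.1 : ℝ))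
        (fun x : Σ i : Fin n, Fin (d i) => q x.1 / (d x.1 : ℝ)) ↔
      ThermoMajorizes β E p q := by
  change Majorizes (blowup d p) (blowup d q) ↔ _
  constructor
  · intro hmaj π σ hπ hσ x hx
    refine tmCurve_le_tmCurve_of_natCast_div hM hdM (fun k => ?_) hx.1
    rcases le_total k (∑ i, d i) with hk | hk
    · rw [← topSum_blowup hM hdM hπ hk, ← topSum_blowup hM hdM hσ hk]
      exact hmaj k
    · rw [tmCurve_natCast_div_of_le hM hdM p π hk, tmCurve_natCast_div_of_le hM hdM q σ hk,
        hp.2, hq.2]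
  · intro htm k
    obtain ⟨π, hπ⟩ := exists_isBetaOrdering β E p
    obtain ⟨σ, hσ⟩ := exists_isBetaOrdering β E q
    rcases le_or_gt k (∑ i, d i) with hk | hk
    · rw [topSum_blowup hM hdM hπ hk, topSum_blowup hM hdM hσ hk]
      refine htm π σ hπ hσ _ ⟨by positivity, ?_⟩
      rw [partZ_eq hM.ne' hdM]
      gcongr
    · have hcard : Fintype.card (Σ i : Fin n, Fin (d i)) < k := by simpa using hk
      rw [topSum_of_card_lt _ hcard, topSum_of_card_lt _ hcard]

/-- Suppose `d i := M * exp (-β E i)` is a positive integer for every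
`i`.  Let `u` (resp. `v`) be the vector of length `∑ i, d i` whose entries are
`p i / d i` (resp. `q i / d i`), each repeated `d i` times (modelled on the sigma type
`Σ i, Fin (d i)`).  Then `u` majorizes `v` iff `p` thermo-majorizes `q`. -/
theorem blowup_majorizes_iff_thermoMajorizes {n : ℕ} (β : ℝ) (hβ : 0 < β)
    (E : Fin n → ℝ) (M : ℝ) (hM : 0 < M) (d : Fin n → ℕ) (hdpos : ∀ i, 0 < d i)
    (hdM : ∀ i, (d i : ℝ) = M * Real.exp (-(β * E i)))
    (p q : Fin n → ℝ) (hp : IsProbDist p) (hq : IsProbDist q) :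
    Majorizes (fun x : Σ i : Fin n, Fin (d i) => p x.1 / (d x.1 : ℝ))
        (fun x : Σ i : Fin n, Fin (d i) => q x.1 / (d x.1 : ℝ)) ↔
      ThermoMajorizes β E p q :=
  blowup_majorizes_iff_thermoMajorizes_general β E M hM d hdM p q hp hq
end

section
/- For a two-level system, every Gibbs-preserving stochastic matrix is a mixture of the identity and the two-level quasi-cycle: let β > 0 and energies E_0 ≤ E_1 on Fin 2 with Gibbs distribution τ, and let Q be the stochastic matrix with Q_{10} = exp(−β(E_1 − E_0)), Q_{00} = 1 − exp(−β(E_1 − E_0)), Q_{01} = 1, Q_{11} = 0. Then a stochastic 2×2 matrix G satisfies Gτ = τ if and only if G = r·Q + (1−r)·I for some r ∈ [0,1], and this r is unique. -/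
open Finset Matrix

/-- The two-level quasi-cycle: `Q₁₀ = exp (-β (E 1 - E 0))`, `Q₀₀ = 1 - exp (-β (E 1 - E 0))`,
`Q₀₁ = 1`, `Q₁₁ = 0`. -/
noncomputable def twoLevelQuasiCycle (β : ℝ) (E : Fin 2 → ℝ) : Matrix (Fin 2) (Fin 2) ℝ :=
  !![1 - Real.exp (-(β * (E 1 - E 0))), 1;
     Real.exp (-(β * (E 1 - E 0))), 0]

/-- For a two-level system, a stochastic matrix preserves the Gibbs
state iff it is a mixture `r • Q + (1 - r) • I` of the quasi-cycle and the identity for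
a unique `r ∈ [0, 1]`. -/
theorem two_level_gibbs_preserving_characterization (β : ℝ) (hβ : 0 < β)
    (E : Fin 2 → ℝ) (hE : E 0 ≤ E 1) (G : Matrix (Fin 2) (Fin 2) ℝ)
    (hG : IsStochastic G) :
    G.mulVec (gibbs β E) = gibbs β E ↔
      ∃! r : ℝ, r ∈ Set.Icc (0 : ℝ) 1 ∧
        G = r • twoLevelQuasiCycle β E + (1 - r) • (1 : Matrix (Fin 2) (Fin 2) ℝ) := by
  obtain ⟨hnn, hcol⟩ := hG
  set ε := Real.exp (-(β * (E 1 - E 0))) with hε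
  have hτ1 : gibbs β E 1 = ε * gibbs β E 0 := by
    simp only [gibbs, hε]
    have hZ : partZ β E ≠ 0 := by
      have : 0 < partZ β E := by
        unfold partZ
        exact Finset.sum_pos (fun i _ => Real.exp_pos _) ⟨0, Finset.mem_univ 0⟩
      exact ne_of_gt this
    rw [div_eq_iff hZ, mul_assoc, div_mul_cancel₀ _ hZ, ← Real.exp_add]
    congr 1
    ring
  have hτ0pos : 0 < gibbs β E 0 :=
    div_pos (Real.exp_pos _) (by
      unfold partZ
      exact Finset.sum_pos (fun i _ => Real.exp_pos _) ⟨0, Finset.mem_univ 0⟩)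
  have hc0 := hcol 0
  have hc1 := hcol 1
  rw [Fin.sum_univ_two] at hc0 hc1
  constructor
  · intro h
    have h0 := congrFun h 0
    simp only [Matrix.mulVec, dotProduct, Fin.sum_univ_two] at h0
    rw [hτ1] at h0
    -- h0 : G 0 0 * τ0 + G 0 1 * (ε * τ0) = τ0
    have hkey : G 1 0 = G 0 1 * ε := by
      have : (G 0 0 + G 0 1 * ε) * gibbs β E 0 = 1 * gibbs β E 0 := by
        rw [one_mul]; linarith [h0]
      have h2 : G 0 0 + G 0 1 * ε = 1 := mul_right_cancel₀ (ne_of_gt hτ0pos) this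
      linarith
    refine ⟨G 0 1, ⟨⟨hnn 0 1, by linarith [hnn 1 1]⟩, ?_⟩, ?_⟩
    · ext i j
      fin_cases i <;> fin_cases j <;>
        simp [twoLevelQuasiCycle, Matrix.one_apply, ← hε] <;> linarith
    · rintro y ⟨-, hy⟩
      have := congrFun (congrFun hy 0) 1
      simpa [twoLevelQuasiCycle, Matrix.one_apply, ← hε] using this.symm
  · rintro ⟨r, ⟨⟨hr0, hr1⟩, hGeq⟩, -⟩
    subst hGeq
    funext i
    fin_cases i <;>
      simp [Matrix.mulVec, dotProduct, Fin.sum_univ_two, twoLevelQuasiCycle,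
        Matrix.one_apply, ← hε, hτ1] <;> ring
end
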